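/- arXiv:2405.12025 — 10 statements merged into one kernel-verified Lean document; each statement's English description precedes it below -/
import Mathlib

section
/- Let n ≥ 16 be an integer and let D be an S_{2,1}-free oriented graph on n vertices. Then the number of arcs of D satisfies a(D) ≤ ⌊(n+1)²/4⌋. -/
/-- An oriented graph on `V`: an arc relation in which no two vertices are
joined by arcs in both directions (in particular it is irreflexive). -/
def IsOriented {V : Type*} (A : V → V → Prop) : Prop :=
  ∀ u v : V, A u v → ¬ A v u

/-- The in-degree of `v`: the number of in-neighbours of `v`. -/
noncomputable def inDeg {V : Type*} (A : V → V → Prop) (v : V) : ℕ :=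
  {u : V | A u v}.ncard

/-- The number of arcs of the digraph. -/
noncomputable def arcCount {V : Type*} (A : V → V → Prop) : ℕ :=
  {p : V × V | A p.1 p.2}.ncard

/-- A copy of `S_{k,1}` (the 1-subdivision of the in-star of order `k+1`)
centered at `v`: pairwise distinct vertices `v, u 0, …, u (k-1), w 0, …, w (k-1)`
with arcs `w i → u i` and `u i → v`. -/
def HasSCopyAt {V : Type*} (A : V → V → Prop) (k : ℕ) (v : V) : Prop :=
  ∃ u w : Fin k → V,
    Function.Injective u ∧ Function.Injective w ∧
    (∀ i j : Fin k, u i ≠ w j) ∧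
    (∀ i : Fin k, u i ≠ v) ∧ (∀ i : Fin k, w i ≠ v) ∧
    (∀ i : Fin k, A (w i) (u i)) ∧ (∀ i : Fin k, A (u i) v)

/-- `A` is `S_{k,1}`-free: no copy of `S_{k,1}` with any center. -/
def SFree {V : Type*} (A : V → V → Prop) (k : ℕ) : Prop :=
  ∀ v : V, ¬ HasSCopyAt A k v

/-!
Call a vertex low if its in-degree is at most one, and let `L` be the set of low vertices.
Two in-neighbours of `v` of in-degree at least two would be the middles of the two arms of an
`S_{2,1}` centred at `v`, so every in-degree is at most `|L| + 1`, while the arcs into `L`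
number `|L|` minus the number of sources. If no vertex `v₀` receives arcs from all vertices of
in-degree one together with one from a non-low vertex, every in-degree is at most `|L|`, and
`a(D) ≤ (n - |L| + 1) |L|`. Otherwise, following the two-paths into `v₀`, one finds a non-low
vertex all of whose in-neighbours but one are sources, and `a(D) ≤ (n - |L|) (|L| + 1)`.
In both cases the two factors sum to `n + 1`, so `a(D) ≤ (n + 1)² / 4`.
-/

section InNeighbours

variable {V : Type*} {A : V → V → Prop}

lemma IsOriented.ne (hA : IsOriented A) {x y : V} (h : A x y) : x ≠ y := by
  rintro rfl
  exact hA x x h h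

lemma inDeg_eq_one_iff {u : V} : inDeg A u = 1 ↔ ∃ p, ∀ z, A z u ↔ z = p := by
  simp only [inDeg, Set.ncard_eq_one, Set.ext_iff, Set.mem_ofPred_eq, Set.mem_singleton_iff]

lemma exists_inNbr_ne_of_two_le_inDeg {u : V} (h : 2 ≤ inDeg A u) (x : V) :
    ∃ w, A w u ∧ w ≠ x :=
  Set.exists_ne_of_one_lt_ncard h x

lemma hasSCopyAt_two (hA : IsOriented A) {v u₁ u₂ w₁ w₂ : V}
    (h₁ : A u₁ v) (h₂ : A u₂ v) (hw₁ : A w₁ u₁) (hw₂ : A w₂ u₂)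
    (hu : u₁ ≠ u₂) (hw : w₁ ≠ w₂) (h₁₂ : w₁ ≠ u₂) (h₂₁ : w₂ ≠ u₁) :
    HasSCopyAt A 2 v := by
  refine ⟨![u₁, u₂], ![w₁, w₂], ?_, ?_, ?_, ?_, ?_, ?_, ?_⟩ <;>
    simp only [Function.Injective, Fin.forall_fin_two, Matrix.cons_val_zero, Matrix.cons_val_one,
      Matrix.cons_val_fin_one]
  · simp [hu, hu.symm]
  · simp [hw, hw.symm]
  · exact ⟨⟨(hA.ne hw₁).symm, h₂₁.symm⟩, h₁₂.symm, (hA.ne hw₂).symm⟩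
  · exact ⟨hA.ne h₁, hA.ne h₂⟩
  · exact ⟨fun h => hA _ _ h₁ (h ▸ hw₁), fun h => hA _ _ h₂ (h ▸ hw₂)⟩
  · exact ⟨hw₁, hw₂⟩
  · exact ⟨h₁, h₂⟩

variable (hA : IsOriented A) (hF : SFree A 2)
include hA hF

lemma subsingleton_inNbrs_two_le_inDeg (v : V) :
    {u | A u v ∧ 2 ≤ inDeg A u}.Subsingleton := by
  rintro x ⟨hx, hdx⟩ y ⟨hy, hdy⟩
  by_contra hxy
  wlog hnxy : ¬ A x y generalizing x y
  · exact this hy hdy hx hdx (Ne.symm hxy) (hA x y (not_not.mp hnxy))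
  obtain ⟨w₁, hw₁, hw₁y⟩ := exists_inNbr_ne_of_two_le_inDeg hdx y
  obtain ⟨w₂, hw₂, hw₂w₁⟩ := exists_inNbr_ne_of_two_le_inDeg hdy w₁
  exact hF v <| hasSCopyAt_two hA hx hy hw₁ hw₂ hxy hw₂w₁.symm hw₁y
    (fun h => hnxy (h ▸ hw₂))

-- An in-neighbour `z ∉ {u, p}` of `u₁` would complete the arms `p → u → v`, `z → u₁ → v`.
lemma inNbr_iff_of_unique_inNbr {v u u₁ p : V} (hu : A u v) (hu₁ : A u₁ v)
    (hp : ∀ z, A z u ↔ z = p) (hpu₁ : p ≠ u₁) (hd₁ : 2 ≤ inDeg A u₁) :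
    ∀ z, A z u₁ ↔ z = u ∨ z = p := by
  have hdu : inDeg A u = 1 := inDeg_eq_one_iff.mpr ⟨p, hp⟩
  have hsub : {z | A z u₁} ⊆ {u, p} := by
    intro z hz
    by_contra hzup
    simp only [Set.mem_insert_iff, Set.mem_singleton_iff, not_or] at hzup
    exact hF v <| hasSCopyAt_two hA hu₁ hu hz ((hp p).mpr rfl)
      (fun h => by subst h; omega) hzup.2 hzup.1 hpu₁
  have hcard : ({u, p} : Set V).ncard ≤ {z | A z u₁}.ncard :=
    (Set.ncard_insert_le _ _).trans (by rw [Set.ncard_singleton]; exact hd₁)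
  intro z
  rw [← Set.mem_ofPred_eq (p := fun z => A z u₁), Set.eq_of_subset_of_ncard_le hsub hcard]
  simp

lemma subsingleton_inNbrs_of_forall_inDeg_ne_one {y : V} (hy : ∀ z, A z y → inDeg A z ≠ 1) :
    {z | A z y ∧ inDeg A z ≠ 0}.Subsingleton :=
  (subsingleton_inNbrs_two_le_inDeg hA hF y).anti fun z ⟨hz, hdz⟩ =>
    ⟨hz, by have := hy z hz; omega⟩

section CommonHead

variable {v₀ u₁ : V} (hall : ∀ u, inDeg A u = 1 → A u v₀) (hu₁ : A u₁ v₀)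
  (hd₁ : 2 ≤ inDeg A u₁)
include hall hu₁ hd₁

-- Both `u` and `z` pin down the in-neighbourhood of `u₁`: it is `{u, p}` and `{z, r}`.
lemma eq_and_eq_of_unique_inNbrs {u p z r : V} (hp : ∀ x, A x u ↔ x = p)
    (hr : ∀ x, A x z ↔ x = r) (hpu₁ : p ≠ u₁) (hru₁ : r ≠ u₁) (hzu : z ≠ u) :
    z = p ∧ r = u := by
  have hNu := inNbr_iff_of_unique_inNbr hA hF
    (hall u (inDeg_eq_one_iff.mpr ⟨p, hp⟩)) hu₁ hp hpu₁ hd₁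
  have hNz := inNbr_iff_of_unique_inNbr hA hF
    (hall z (inDeg_eq_one_iff.mpr ⟨r, hr⟩)) hu₁ hr hru₁ hd₁
  have hzp := (hNu z).mp ((hNz z).mpr (Or.inl rfl))
  have hur := (hNz u).mp ((hNu u).mpr (Or.inl rfl))
  exact ⟨hzp.resolve_left hzu, (hur.resolve_left hzu.symm).symm⟩

lemma exists_two_le_inDeg_subsingleton_inNbrs :
    ∃ y, 2 ≤ inDeg A y ∧ {z | A z y ∧ inDeg A z ≠ 0}.Subsingleton := by
  by_cases hc : ∀ u, inDeg A u = 1 → A u₁ u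
  · exact ⟨u₁, hd₁, subsingleton_inNbrs_of_forall_inDeg_ne_one hA hF
      fun z hz hdz => hA _ _ hz (hc z hdz)⟩
  push Not at hc
  obtain ⟨u, hdu, hnu⟩ := hc
  obtain ⟨p, hp⟩ := inDeg_eq_one_iff.mp hdu
  have hpu : A p u := (hp p).mpr rfl
  have hpu₁ : p ≠ u₁ := fun h => hnu (h ▸ hpu)
  have hN := inNbr_iff_of_unique_inNbr hA hF (hall u hdu) hu₁ hp hpu₁ hd₁
  -- The witness is `u₁` if `p` is a source and `p` otherwise; `inDeg A p = 1` is impossible.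
  rcases (by omega : inDeg A p = 0 ∨ inDeg A p = 1 ∨ 2 ≤ inDeg A p) with h0 | h1 | h2
  · refine ⟨u₁, hd₁, (Set.subsingleton_singleton (a := u)).anti fun z ⟨hz, hdz⟩ => ?_⟩
    rcases (hN z).mp hz with rfl | rfl
    exacts [rfl, absurd h0 hdz]
  · obtain ⟨q, hq⟩ := inDeg_eq_one_iff.mp h1
    have hqu₁ : q ≠ u₁ := fun h => hA _ _ ((hN p).mpr (Or.inr rfl)) (h ▸ (hq q).mpr rfl)
    obtain ⟨-, rfl⟩ := eq_and_eq_of_unique_inNbrs hA hF hall hu₁ hd₁ hp hq hpu₁ hqu₁ (hA.ne hpu)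
    exact absurd ((hq q).mpr rfl) (hA _ _ hpu)
  · refine ⟨p, h2, subsingleton_inNbrs_of_forall_inDeg_ne_one hA hF fun z hzp hdz => ?_⟩
    obtain ⟨r, hr⟩ := inDeg_eq_one_iff.mp hdz
    have hzu : z ≠ u := by rintro rfl; exact hA _ _ hpu hzp
    by_cases hru₁ : r = u₁
    · subst hru₁
      exact hF v₀ <| hasSCopyAt_two hA (hall z hdz) (hall u hdu) ((hr r).mpr rfl) hpu hzu
        hpu₁.symm (fun h => by subst h; omega) (fun h => by subst h; omega)
    · obtain ⟨rfl, -⟩ := eq_and_eq_of_unique_inNbrs hA hF hall hu₁ hd₁ hp hr hpu₁ hru₁ hzu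
      exact hA.ne hzp rfl

end CommonHead

end InNeighbours

section Counting

open Finset
open scoped Classical

variable {V : Type*} [Fintype V] {A : V → V → Prop}

lemma inDeg_eq_card_filter (v : V) : inDeg A v = #{u | A u v} := by
  rw [inDeg, Set.ncard_eq_toFinset_card', Set.toFinset_ofPred]

lemma arcCount_eq_sum_inDeg : arcCount A = ∑ v, inDeg A v := by
  simp only [arcCount, inDeg_eq_card_filter, Set.ncard_eq_toFinset_card', Set.toFinset_ofPred,
    card_filter]
  rw [Fintype.sum_prod_type, sum_comm]

lemma inDeg_le_card_add_one (S : Finset V) {v : V} (h : {u | A u v ∧ u ∉ S}.Subsingleton) :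
    inDeg A v ≤ #S + 1 := by
  have hsub : ({u | A u v} : Finset V) ⊆ S ∪ ({u | A u v ∧ u ∉ S} : Finset V) := by
    intro u
    simp only [mem_filter, mem_union, mem_univ, true_and]
    tauto
  have hle : #({u | A u v ∧ u ∉ S} : Finset V) ≤ 1 :=
    card_le_one.mpr fun a ha b hb => h (by simpa using ha) (by simpa using hb)
  rw [inDeg_eq_card_filter]
  exact (card_le_card hsub).trans ((card_union_le _ _).trans (by omega))

lemma sum_inDeg_add_card_inDeg_eq_zero :
    ∑ v ∈ {v | inDeg A v ≤ 1}, inDeg A v + #{v | inDeg A v = 0} = #{v | inDeg A v ≤ 1} := by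
  have hzero : ({v | inDeg A v = 0} : Finset V) =
      ({v | inDeg A v ≤ 1} : Finset V).filter (inDeg A · = 0) := by
    ext v
    simp only [mem_filter, mem_univ, true_and]
    omega
  rw [hzero, card_filter, ← sum_add_distrib, card_eq_sum_ones]
  refine sum_congr rfl fun v hv => ?_
  have := (mem_filter.mp hv).2
  split_ifs <;> omega

variable (hA : IsOriented A) (hF : SFree A 2)
include hA hF

lemma inDeg_le_card_inDeg_le_one_add_one (v : V) :
    inDeg A v ≤ #{u | inDeg A u ≤ 1} + 1 :=
  inDeg_le_card_add_one _ <|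
    (subsingleton_inNbrs_two_le_inDeg hA hF v).anti fun _ ⟨hu, hd⟩ => ⟨hu, by
      simp only [mem_filter, mem_univ, true_and, not_le] at hd; omega⟩

lemma inDeg_le_card_inDeg_le_one {v : V}
    (hv : (∀ u, inDeg A u = 1 → A u v) → ∀ u, A u v → inDeg A u ≤ 1) :
    inDeg A v ≤ #{u | inDeg A u ≤ 1} := by
  by_cases hall : ∀ u, inDeg A u = 1 → A u v
  · rw [inDeg_eq_card_filter]
    exact card_le_card fun u hu => by simpa using hv hall u (by simpa using hu)
  push Not at hall
  obtain ⟨u, hdu, hnu⟩ := hall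
  have hmem : u ∈ ({v | inDeg A v ≤ 1} : Finset V) := by simp [hdu]
  have hle : inDeg A v ≤ #(({v | inDeg A v ≤ 1} : Finset V).erase u) + 1 :=
    inDeg_le_card_add_one _ <|
      (subsingleton_inNbrs_two_le_inDeg hA hF v).anti fun z ⟨hz, hzS⟩ => by
        have hzu : z ≠ u := fun h => hnu (h ▸ hz)
        simp only [mem_erase, ne_eq, hzu, not_false_eq_true, mem_filter, mem_univ, true_and,
          not_le] at hzS
        exact ⟨hz, by omega⟩
  rw [card_erase_of_mem hmem] at hle
  have := card_pos.mpr ⟨u, hmem⟩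
  omega

lemma arcCount_le_mul : ∃ x y, x + y = Fintype.card V + 1 ∧ arcCount A ≤ x * y := by
  have hL := sum_inDeg_add_card_inDeg_eq_zero (A := A)
  set L : Finset V := {v | inDeg A v ≤ 1}
  have hn : #L + #Lᶜ = Fintype.card V := card_add_card_compl L
  rw [arcCount_eq_sum_inDeg, ← sum_add_sum_compl L]
  by_cases hP : ∃ v₀ u₁, (∀ u, inDeg A u = 1 → A u v₀) ∧ A u₁ v₀ ∧ 2 ≤ inDeg A u₁
  · obtain ⟨v₀, u₁, hall, hu₁, hd₁⟩ := hP
    obtain ⟨y, hy, hys⟩ := exists_two_le_inDeg_subsingleton_inNbrs hA hF hall hu₁ hd₁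
    have hyL : y ∈ Lᶜ := by
      simp only [L, compl_filter, not_le, mem_filter, mem_univ, true_and]; omega
    have hdy := inDeg_le_card_add_one ({u | inDeg A u = 0} : Finset V) <|
      hys.anti fun z ⟨hz, hzS⟩ => ⟨hz, by simpa using hzS⟩
    have hrest := sum_le_card_nsmul (Lᶜ.erase y) (inDeg A) (#L + 1)
      fun v _ => inDeg_le_card_inDeg_le_one_add_one hA hF v
    rw [smul_eq_mul] at hrest
    have hcard := card_erase_add_one hyL
    refine ⟨#Lᶜ, #L + 1, by omega, ?_⟩
    rw [← add_sum_erase _ _ hyL, ← hcard]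
    nlinarith
  · push Not at hP
    have hle : ∀ v, inDeg A v ≤ #L := fun v =>
      inDeg_le_card_inDeg_le_one hA hF fun hall u hu => by have := hP v u hall hu; omega
    have hrest := sum_le_card_nsmul Lᶜ (inDeg A) #L fun v _ => hle v
    rw [smul_eq_mul] at hrest
    refine ⟨#Lᶜ + 1, #L, by omega, ?_⟩
    nlinarith

end Counting

theorem arc_bound_S21_general {V : Type*} [Fintype V] (A : V → V → Prop)
    (n : ℕ) (hcard : Fintype.card V = n)
    (hori : IsOriented A) (hfree : SFree A 2) :
    arcCount A ≤ (n + 1) ^ 2 / 4 := by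
  obtain ⟨x, y, hxy, hle⟩ := arcCount_le_mul hori hfree
  rw [Nat.le_div_iff_mul_le four_pos, ← hcard, ← hxy]
  calc arcCount A * 4 ≤ 4 * x * y := by linarith
    _ ≤ (x + y) ^ 2 := four_mul_le_sq_add x y

/-- If `n ≥ 16` and `D` is an `S_{2,1}`-free oriented graph on `n`
vertices, then `a(D) ≤ ⌊(n+1)²/4⌋`. -/
theorem arc_bound_S21 {V : Type*} [Fintype V] (A : V → V → Prop)
    (n : ℕ) (hn : 16 ≤ n) (hcard : Fintype.card V = n)
    (hori : IsOriented A) (hfree : SFree A 2) :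
    arcCount A ≤ (n + 1) ^ 2 / 4 :=
  arc_bound_S21_general A n hcard hori hfree
end

section
/- For every integer n ≥ 16 there exists an S_{2,1}-free oriented graph on n vertices with exactly ⌊(n+1)²/4⌋ arcs; hence the oriented Turán number ex_ori(n, S_{2,1}) equals ⌊(n+1)²/4⌋. -/
set_option linter.unnecessarySeqFocus false
set_option linter.unnecessarySimpa false

open Finset

attribute [local instance] Classical.propDecidable

namespace ExOriAux

variable {n : ℕ}

noncomputable def Nin (A : Fin n → Fin n → Prop) (v : Fin n) : Finset (Fin n) :=
  Finset.univ.filter (fun u => A u v)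

noncomputable def din (A : Fin n → Fin n → Prop) (v : Fin n) : ℕ := (Nin A v).card

lemma mem_Nin {A : Fin n → Fin n → Prop} {u v : Fin n} : u ∈ Nin A v ↔ A u v := by
  simp [Nin]

lemma sdr {α : Type*} {A1 A2 : Finset α} (h1 : A1.Nonempty) (h2 : A2.Nonempty)
    (h : ∀ a ∈ A1, ∀ b ∈ A2, a = b) : ∃ x, A1 = {x} ∧ A2 = {x} := by
  obtain ⟨a, ha⟩ := h1
  obtain ⟨b, hb⟩ := h2
  have hab : a = b := h a ha b hb
  refine ⟨a, ?_, ?_⟩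
  · ext y
    simp only [Finset.mem_singleton]
    exact ⟨fun hy => (h y hy b hb).trans hab.symm, fun hy => hy ▸ ha⟩
  · ext y
    simp only [Finset.mem_singleton]
    exact ⟨fun hy => (h a ha y hy).symm, fun hy => hy ▸ (hab.symm ▸ hb)⟩

variable {A : Fin n → Fin n → Prop}

lemma pair (ho : IsOriented A) (hs : SFree A 2)
    {v u1 u2 w1 w2 : Fin n}
    (h1 : A u1 v) (h2 : A u2 v) (hu : u1 ≠ u2) (hw1 : A w1 u1) (hw2 : A w2 u2)
    (hw1u : w1 ≠ u2) (hw2u : w2 ≠ u1) (hww : w1 ≠ w2) : False := by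
  have noAA : ∀ x : Fin n, ¬ A x x := fun x h => ho x x h h
  apply hs v
  refine ⟨![u1, u2], ![w1, w2], ?_, ?_, ?_, ?_, ?_, ?_, ?_⟩
  · intro i j hij
    fin_cases i <;> fin_cases j <;> simp_all
  · intro i j hij
    fin_cases i <;> fin_cases j <;> simp_all
  · intro i j
    have e1 : u1 ≠ w1 := fun h => noAA u1 (h ▸ hw1)
    have e2 : u2 ≠ w2 := fun h => noAA u2 (h ▸ hw2)
    fin_cases i <;> fin_cases j <;> simp_all [Ne.symm, eq_comm]
  · intro i
    have e1 : u1 ≠ v := fun h => noAA v (h ▸ h1)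
    have e2 : u2 ≠ v := fun h => noAA v (h ▸ h2)
    fin_cases i <;> simp_all
  · intro i
    have e1 : w1 ≠ v := fun h => ho u1 v h1 (h ▸ hw1)
    have e2 : w2 ≠ v := fun h => ho u2 v h2 (h ▸ hw2)
    fin_cases i <;> simp_all
  · intro i; fin_cases i <;> simp_all
  · intro i; fin_cases i <;> simp_all

lemma F1 (ho : IsOriented A) (hs : SFree A 2) {v u1 u2 : Fin n}
    (h1 : A u1 v) (h2 : A u2 v) (hu : u1 ≠ u2)
    (d1 : 2 ≤ din A u1) (d2 : 2 ≤ din A u2) : False := by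
  have hA1ne : ((Nin A u1).erase u2).Nonempty := by
    rw [← Finset.card_pos]
    have := Finset.pred_card_le_card_erase (s := Nin A u1) (a := u2)
    unfold din at d1; omega
  have hA2ne : ((Nin A u2).erase u1).Nonempty := by
    rw [← Finset.card_pos]
    have := Finset.pred_card_le_card_erase (s := Nin A u2) (a := u1)
    unfold din at d2; omega
  have hno : ∀ a ∈ (Nin A u1).erase u2, ∀ b ∈ (Nin A u2).erase u1, a = b := by
    intro a ha b hb
    by_contra hne
    exact pair ho hs h1 h2 hu (mem_Nin.mp (Finset.mem_of_mem_erase ha))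
      (mem_Nin.mp (Finset.mem_of_mem_erase hb))
      (Finset.mem_erase.mp ha).1 (Finset.mem_erase.mp hb).1 hne
  obtain ⟨x, hx1, hx2⟩ := sdr hA1ne hA2ne hno
  have hm1 : u2 ∈ Nin A u1 := by
    by_contra hh
    rw [Finset.erase_eq_of_notMem hh] at hx1
    unfold din at d1; rw [hx1] at d1; simp at d1
  have hm2 : u1 ∈ Nin A u2 := by
    by_contra hh
    rw [Finset.erase_eq_of_notMem hh] at hx2
    unfold din at d2; rw [hx2] at d2; simp at d2
  exact ho u2 u1 (mem_Nin.mp hm1) (mem_Nin.mp hm2)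

lemma P2 (ho : IsOriented A) (hs : SFree A 2) {v u w x : Fin n}
    (hu : A u v) (hw : A w v) (hNu : Nin A u = {x})
    (dw : 2 ≤ din A w) (hxw : x ≠ w) : Nin A w = {u, x} := by
  have huw : u ≠ w := by
    intro h; subst h
    unfold din at dw; rw [hNu] at dw; simp at dw
  have hA1 : (Nin A u).erase w = {x} := by
    rw [hNu, Finset.erase_eq_of_notMem (by simp [hxw.symm])]
  have hA2ne : ((Nin A w).erase u).Nonempty := by
    rw [← Finset.card_pos]
    have := Finset.pred_card_le_card_erase (s := Nin A w) (a := u)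
    unfold din at dw; omega
  have hno : ∀ a ∈ (Nin A u).erase w, ∀ b ∈ (Nin A w).erase u, a = b := by
    intro a ha b hb
    by_contra hne
    exact pair ho hs hu hw huw (mem_Nin.mp (Finset.mem_of_mem_erase ha))
      (mem_Nin.mp (Finset.mem_of_mem_erase hb))
      (Finset.mem_erase.mp ha).1 (Finset.mem_erase.mp hb).1 hne
  obtain ⟨y, hy1, hy2⟩ := sdr (by rw [hA1]; exact ⟨x, Finset.mem_singleton_self x⟩) hA2ne hno
  have hyx : y = x := by
    rw [hA1] at hy1
    exact Finset.singleton_injective hy1.symm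
  subst hyx
  have hsub : Nin A w ⊆ insert u {y} := by
    rw [Finset.subset_insert_iff, hy2]
  have hcard : (insert u ({y} : Finset (Fin n))).card ≤ (Nin A w).card := by
    have h1 : (insert u ({y} : Finset (Fin n))).card ≤ 2 := by
      apply le_trans (Finset.card_insert_le _ _); simp
    unfold din at dw; omega
  exact Finset.eq_of_subset_of_card_le hsub hcard

lemma P3 (ho : IsOriented A) (hs : SFree A 2) {v u u' x x' : Fin n}
    (hu : A u v) (hu' : A u' v) (huu : u ≠ u')
    (hNu : Nin A u = {x}) (hNu' : Nin A u' = {x'})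
    (hxu' : x ≠ u') (hx'u : x' ≠ u) : x = x' := by
  by_contra hne
  exact pair ho hs hu hu' huu
    (mem_Nin.mp (by rw [hNu]; exact Finset.mem_singleton_self x))
    (mem_Nin.mp (by rw [hNu']; exact Finset.mem_singleton_self x'))
    hxu' hx'u hne

lemma card_pairs (A : Fin n → Fin n → Prop) :
    (Finset.univ.filter fun p : Fin n × Fin n => A p.1 p.2).card = ∑ v, din A v := by
  rw [Finset.card_eq_sum_card_fiberwise (f := Prod.snd) (t := Finset.univ)
    (fun x _ => Finset.mem_univ _)]
  apply Finset.sum_congr rfl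
  intro v _
  apply Finset.card_bij (fun p _ => p.1)
  · intro p hp
    simp only [Finset.mem_filter, Finset.mem_univ, true_and] at hp ⊢
    simp [Nin]
    rw [← hp.2]; exact hp.1
  · intro p hp q hq hpq
    simp only [Finset.mem_filter] at hp hq
    exact Prod.ext hpq (hp.2.trans hq.2.symm)
  · intro u hu
    simp only [Nin, Finset.mem_filter, Finset.mem_univ, true_and] at hu
    exact ⟨(u, v), by simp [hu], rfl⟩

theorem upper (A : Fin n → Fin n → Prop) (hn : 16 ≤ n)
    (ho : IsOriented A) (hs : SFree A 2) :
    (∑ v, din A v) ≤ (n + 1) ^ 2 / 4 := by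
  set Pf : Finset (Fin n) := Finset.univ.filter (fun v => din A v ≤ 1) with hPfdef
  set Bb : Finset (Fin n) := Finset.univ.filter (fun v => ¬ din A v ≤ 1) with hBbdef
  set P1 : Finset (Fin n) := Finset.univ.filter (fun v => din A v = 1) with hP1def
  set mv : Fin n → ℕ := fun v => (Pf.filter fun u => ¬ A u v).card with hmvdef
  set V1 : Finset (Fin n) := Bb.filter (fun v => ∃ w, A w v ∧ 2 ≤ din A w) with hV1def
  set V1F : Finset (Fin n) := V1.filter (fun v => mv v = 0) with hV1Fdef
  set M : ℕ := ∑ v ∈ Bb, mv v with hMdef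
  have hpb : Pf.card + Bb.card = n := by
    rw [hPfdef, hBbdef, Finset.card_filter_add_card_filter_not]
    simp
  have hP1P : P1 ⊆ Pf := by
    intro v hv
    simp only [hP1def, hPfdef, Finset.mem_filter] at hv ⊢
    exact ⟨hv.1, by omega⟩
  have hV1B : V1 ⊆ Bb := Finset.filter_subset _ _
  have hV1FV1 : V1F ⊆ V1 := Finset.filter_subset _ _
  have hP1card : ∀ u ∈ P1, din A u = 1 := by
    intro u hu
    simp only [hP1def, Finset.mem_filter] at hu
    exact hu.2
  have hBbcard : ∀ v ∈ Bb, 2 ≤ din A v := by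
    intro v hv
    simp only [hBbdef, Finset.mem_filter] at hv
    omega
  have hBbmem : ∀ v : Fin n, 2 ≤ din A v → v ∈ Bb := by
    intro v hv
    simp only [hBbdef, Finset.mem_filter]
    exact ⟨Finset.mem_univ v, by omega⟩
  have hPfmem : ∀ v : Fin n, din A v ≤ 1 → v ∈ Pf := by
    intro v hv
    simp only [hPfdef, Finset.mem_filter]
    exact ⟨Finset.mem_univ v, hv⟩
  -- sum over Pf
  have sumPf : ∑ v ∈ Pf, din A v ≤ P1.card := by
    have h1 : ∑ v ∈ Pf, din A v ≤ ∑ v ∈ Pf, (if din A v = 1 then 1 else 0) := by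
      apply Finset.sum_le_sum
      intro v hv
      simp only [hPfdef, Finset.mem_filter] at hv
      by_cases h : din A v = 1 <;> simp [h] <;> omega
    have h2 : ∑ v ∈ Pf, (if din A v = 1 then 1 else 0) = (Pf.filter fun v => din A v = 1).card :=
      (Finset.card_filter _ _).symm
    have h3 : (Pf.filter fun v => din A v = 1).card = P1.card := by
      congr 1
      ext v
      simp only [hPfdef, hP1def, Finset.mem_filter, Finset.mem_univ, true_and]
      omega
    omega
  -- the per-vertex identity on Bb
  set cB : Fin n → ℕ := fun v => ((Nin A v).filter (fun u => ¬ din A u ≤ 1)).card with hcBdef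
  have hident : ∀ v ∈ Bb, din A v + mv v = Pf.card + cB v := by
    intro v _
    have e1 : ((Nin A v).filter (fun u => din A u ≤ 1)).card
        + ((Nin A v).filter (fun u => ¬ din A u ≤ 1)).card = din A v := by
      rw [Finset.card_filter_add_card_filter_not]
      rfl
    have e2 : ((Nin A v).filter (fun u => din A u ≤ 1)).card
        = (Pf.filter (fun u => A u v)).card := by
      congr 1
      ext u
      simp only [Nin, hPfdef, Finset.mem_filter, Finset.mem_univ, true_and]
      tauto
    have e3 : (Pf.filter (fun u => A u v)).card + (Pf.filter (fun u => ¬ A u v)).card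
        = Pf.card := by
      rw [Finset.card_filter_add_card_filter_not]
    have e4 : cB v = ((Nin A v).filter (fun u => ¬ din A u ≤ 1)).card := rfl
    have e5 : mv v = (Pf.filter (fun u => ¬ A u v)).card := rfl
    omega
  have hcB1 : ∀ v ∈ Bb, cB v ≤ 1 := by
    intro v _
    rw [hcBdef]
    by_contra h
    push_neg at h
    obtain ⟨w1, hw1, w2, hw2, hne⟩ := Finset.one_lt_card.mp h
    simp only [Finset.mem_filter] at hw1 hw2
    exact F1 ho hs (mem_Nin.mp hw1.1) (mem_Nin.mp hw2.1) hne (by omega) (by omega)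
  have hcBV1 : ∀ v ∈ Bb, v ∉ V1 → cB v = 0 := by
    intro v hv hv1
    by_contra h
    have hne : ((Nin A v).filter (fun u => ¬ din A u ≤ 1)).Nonempty := by
      rw [← Finset.card_pos]
      have : cB v = ((Nin A v).filter (fun u => ¬ din A u ≤ 1)).card := rfl
      omega
    obtain ⟨w, hw⟩ := hne
    simp only [Finset.mem_filter] at hw
    exact hv1 (by
      simp only [hV1def, Finset.mem_filter]
      exact ⟨hv, w, mem_Nin.mp hw.1, by omega⟩)
  have sumcB : ∑ v ∈ Bb, cB v ≤ V1.card := by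
    have h1 : ∑ v ∈ Bb, cB v ≤ ∑ v ∈ Bb, (if v ∈ V1 then 1 else 0) := by
      apply Finset.sum_le_sum
      intro v hv
      by_cases h : v ∈ V1
      · simp only [h, if_true]; exact hcB1 v hv
      · simp only [h, if_false]; exact Nat.le_of_eq (hcBV1 v hv h)
    have h2 : ∑ v ∈ Bb, (if v ∈ V1 then 1 else 0) = (Bb.filter fun v => v ∈ V1).card :=
      (Finset.card_filter _ _).symm
    have h3 : Bb.filter (fun v => v ∈ V1) = V1 := by
      ext v
      simp only [Finset.mem_filter]
      exact ⟨fun h => h.2, fun h => ⟨hV1B h, h⟩⟩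
    have h4 : (Bb.filter fun v => v ∈ V1).card = V1.card := by rw [h3]
    omega
  -- MAIN LEMMA : V1.card + P1.card ≤ M + max Bb.card Pf.card
  have main : V1.card + P1.card ≤ M + max Bb.card Pf.card := by
    -- helper finish
    have finish : ∀ w' ∈ Bb, 1 ≤ P1.card → P1.card ≤ mv w' →
        V1.card + P1.card ≤ M + max Bb.card Pf.card := by
      intro w' hw'B hp1pos hmw
      have hw'F : w' ∉ V1F := by
        intro h
        simp only [hV1Fdef, Finset.mem_filter] at h
        omega
      set T : Finset (Fin n) := (V1 \ V1F).erase w' with hTdef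
      have hTsub : insert w' T ⊆ Bb := by
        intro y hy
        rcases Finset.mem_insert.mp hy with rfl | hy
        · exact hw'B
        · exact hV1B (Finset.mem_sdiff.mp (Finset.mem_of_mem_erase hy)).1
      have hw'T : w' ∉ T := Finset.notMem_erase _ _
      have hM1 : ∑ v ∈ insert w' T, mv v ≤ M := by
        rw [hMdef]
        exact Finset.sum_le_sum_of_subset hTsub
      have hM2 : ∑ v ∈ insert w' T, mv v = mv w' + ∑ v ∈ T, mv v :=
        Finset.sum_insert hw'T
      have hT1 : T.card ≤ ∑ v ∈ T, mv v := by
        rw [Finset.card_eq_sum_ones]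
        apply Finset.sum_le_sum
        intro v hv
        have hv' : v ∈ V1 \ V1F := Finset.mem_of_mem_erase hv
        rw [Finset.mem_sdiff] at hv'
        have : ¬ mv v = 0 := by
          intro h0
          exact hv'.2 (by simp only [hV1Fdef, Finset.mem_filter]; exact ⟨hv'.1, h0⟩)
        omega
      have hVsd : (V1 \ V1F).card = V1.card - V1F.card := Finset.card_sdiff_of_subset hV1FV1
      have hVsd2 : V1F.card ≤ V1.card := Finset.card_le_card hV1FV1
      have hTc : (V1 \ V1F).card - 1 ≤ T.card := Finset.pred_card_le_card_erase
      have hV1Fb : V1F.card + 1 ≤ Bb.card := by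
        have : insert w' V1F ⊆ Bb := by
          intro y hy
          rcases Finset.mem_insert.mp hy with rfl | hy
          · exact hw'B
          · exact hV1B (hV1FV1 hy)
        have hcard := Finset.card_le_card this
        rw [Finset.card_insert_of_notMem hw'F] at hcard
        omega
      have hmax : Bb.card ≤ max Bb.card Pf.card := le_max_left _ _
      omega
    by_cases hp1 : P1.card = 0
    · have h1 : V1.card ≤ Bb.card := Finset.card_le_card hV1B
      have h2 : Bb.card ≤ max Bb.card Pf.card := le_max_left _ _
      omega
    · by_cases hV1F : V1F = ∅
      · -- every v in V1 has mv v ≥ 1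
        have h1 : V1.card ≤ ∑ v ∈ V1, mv v := by
          rw [Finset.card_eq_sum_ones]
          apply Finset.sum_le_sum
          intro v hv
          have : ¬ mv v = 0 := by
            intro h0
            have : v ∈ V1F := by
              simp only [hV1Fdef, Finset.mem_filter]; exact ⟨hv, h0⟩
            simp [hV1F] at this
          omega
        have h2 : ∑ v ∈ V1, mv v ≤ M := by
          rw [hMdef]; exact Finset.sum_le_sum_of_subset hV1B
        have h3 : P1.card ≤ Pf.card := Finset.card_le_card hP1P
        have h4 : Pf.card ≤ max Bb.card Pf.card := le_max_right _ _
        omega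
      · -- hard case
        obtain ⟨v0, hv0⟩ := Finset.nonempty_iff_ne_empty.mpr hV1F
        have hv0V1 : v0 ∈ V1 := hV1FV1 hv0
        have hv0mv : mv v0 = 0 := by
          simp only [hV1Fdef, Finset.mem_filter] at hv0
          exact hv0.2
        have hfull : ∀ q ∈ Pf, A q v0 := by
          intro q hq
          have : (Pf.filter fun u => ¬ A u v0) = ∅ := Finset.card_eq_zero.mp hv0mv
          by_contra hq2
          have : q ∈ (Pf.filter fun u => ¬ A u v0) := Finset.mem_filter.mpr ⟨hq, hq2⟩
          simp_all
        obtain ⟨w, hwv0, hdw⟩ : ∃ w, A w v0 ∧ 2 ≤ din A w := by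
          simp only [hV1def, Finset.mem_filter] at hv0V1
          exact hv0V1.2
        have hwB : w ∈ Bb := hBbmem w hdw
        have hp1pos : 1 ≤ P1.card := by omega
        have hAttack : ∀ u' ∈ P1, A u' v0 := fun u' h => hfull u' (hP1P h)
        have hNinP1 : ∀ u' ∈ P1, ∃ x, Nin A u' = {x} := by
          intro u' h
          exact Finset.card_eq_one.mp (hP1card u' h)
        by_cases hS : ∀ u' ∈ P1, Nin A u' = {w}
        · -- K1 with w
          apply finish w hwB hp1pos
          have hsub : P1 ⊆ Pf.filter (fun u => ¬ A u w) := by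
            intro u' hu'
            refine Finset.mem_filter.mpr ⟨hP1P hu', ?_⟩
            have hwu' : A w u' := mem_Nin.mp (by rw [hS u' hu']; exact Finset.mem_singleton_self w)
            exact fun h => ho w u' hwu' h
          exact Finset.card_le_card hsub
        · push_neg at hS
          obtain ⟨uh, huhP1, huhne⟩ := hS
          obtain ⟨xh, hNuh⟩ := hNinP1 uh huhP1
          have hxhw : xh ≠ w := by
            intro h; subst h; exact huhne hNuh
          have hNw : Nin A w = {uh, xh} :=
            P2 ho hs (hAttack uh huhP1) hwv0 hNuh hdw hxhw
          have hAxhuh : A xh uh := mem_Nin.mp (by rw [hNuh]; exact Finset.mem_singleton_self xh)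
          have hP1S : ∀ u'' ∈ P1, u'' ≠ uh → Nin A u'' = {w} := by
            intro u'' hu'' hne
            obtain ⟨x'', hNu''⟩ := hNinP1 u'' hu''
            by_contra hne2
            have hx''w : x'' ≠ w := by
              intro h; subst h; exact hne2 hNu''
            have hNw2 : Nin A w = {u'', x''} :=
              P2 ho hs (hAttack u'' hu'') hwv0 hNu'' hdw hx''w
            -- {uh, xh} = {u'', x''} and u'' ≠ uh
            have hu''mem : u'' ∈ ({uh, xh} : Finset (Fin n)) := by
              rw [← hNw, hNw2]; exact Finset.mem_insert_self _ _
            have hu''xh : u'' = xh := by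
              rcases Finset.mem_insert.mp hu''mem with h | h
              · exact absurd h hne
              · exact Finset.mem_singleton.mp h
            have huhmem : uh ∈ ({u'', x''} : Finset (Fin n)) := by
              rw [← hNw2, hNw]; exact Finset.mem_insert_self _ _
            have huhx'' : uh = x'' := by
              rcases Finset.mem_insert.mp huhmem with h | h
              · exact absurd h.symm hne
              · exact Finset.mem_singleton.mp h
            -- A u'' uh (since u'' = xh ∈ Nin uh) and A uh u'' (since uh = x'' ∈ Nin u'')
            have h1 : A u'' uh := hu''xh ▸ hAxhuh
            have h2 : A uh u'' := by
              have : A x'' u'' := mem_Nin.mp (by rw [hNu'']; exact Finset.mem_singleton_self x'')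
              exact huhx'' ▸ this
            exact ho u'' uh h1 h2
          by_cases hz : ∃ s ∈ Pf, din A s = 0 ∧ ¬ A s w
          · obtain ⟨s, hsPf, hds, hsw⟩ := hz
            apply finish w hwB hp1pos
            have hsub : insert s (P1.erase uh) ⊆ Pf.filter (fun u => ¬ A u w) := by
              intro y hy
              rcases Finset.mem_insert.mp hy with rfl | hy
              · exact Finset.mem_filter.mpr ⟨hsPf, hsw⟩
              · have hyP1 : y ∈ P1 := Finset.mem_of_mem_erase hy
                have hyne : y ≠ uh := (Finset.mem_erase.mp hy).1
                refine Finset.mem_filter.mpr ⟨hP1P hyP1, ?_⟩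
                have : A w y := mem_Nin.mp (by rw [hP1S y hyP1 hyne]; exact Finset.mem_singleton_self w)
                exact fun h => ho w y this h
            have hcard := Finset.card_le_card hsub
            have hsnotin : s ∉ P1.erase uh := by
              intro h
              have := hP1card s (Finset.mem_of_mem_erase h)
              omega
            rw [Finset.card_insert_of_notMem hsnotin] at hcard
            have h5 := Finset.card_erase_add_one huhP1
            have h6 : mv w = (Pf.filter (fun u => ¬ A u w)).card := rfl
            omega
          · push_neg at hz
            rcases Nat.lt_or_ge P1.card 2 with hp2 | hp2
            · -- P1 = {uh}
              have hcP1 : P1.card = 1 := by omega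
              have hP1sing : P1 = {uh} := by
                obtain ⟨a, ha⟩ := Finset.card_eq_one.mp hcP1
                rw [ha] at huhP1 ⊢
                rw [Finset.mem_singleton.mp huhP1]
              have hZx : ∀ s' ∈ Pf, din A s' = 0 → s' = xh := by
                intro s' hs' hds'
                have hAs'w : A s' w := hz s' hs' hds'
                have : s' ∈ Nin A w := mem_Nin.mpr hAs'w
                rw [hNw] at this
                rcases Finset.mem_insert.mp this with h | h
                · exfalso
                  have := hP1card uh huhP1
                  rw [← h] at this
                  omega
                · exact Finset.mem_singleton.mp h
              have hPf2 : Pf.card ≤ 2 := by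
                have hsub : Pf ⊆ {uh, xh} := by
                  intro y hy
                  have hdy : din A y ≤ 1 := by
                    simp only [hPfdef, Finset.mem_filter] at hy
                    exact hy.2
                  rcases Nat.lt_or_ge (din A y) 1 with h | h
                  · have : y = xh := hZx y hy (by omega)
                    rw [this]
                    exact Finset.mem_insert.mpr (Or.inr (Finset.mem_singleton_self xh))
                  · have : y ∈ P1 := by
                      simp only [hP1def, Finset.mem_filter]
                      exact ⟨Finset.mem_univ y, by omega⟩
                    rw [hP1sing] at this
                    exact Finset.mem_insert.mpr (Or.inl (Finset.mem_singleton.mp this))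
                calc Pf.card ≤ ({uh, xh} : Finset (Fin n)).card := Finset.card_le_card hsub
                  _ ≤ 2 := Finset.card_insert_le _ _ |>.trans (by simp)
              have hple : Pf.card ≤ Bb.card := by omega
              have hmaxB : Bb.card ≤ max Bb.card Pf.card := le_max_left _ _
              have hP1c : P1.card = 1 := by
                rw [hP1sing]; exact Finset.card_singleton uh
              -- goal: V1.card + 1 ≤ M + Bb.card
              by_cases hVB : Bb ⊆ V1
              · have hV1Bb : V1 = Bb := Finset.Subset.antisymm hV1B hVB
                by_cases hM0 : M = 0
                · exfalso
                  have hall : ∀ v ∈ Bb, mv v = 0 :=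
                    Finset.sum_eq_zero_iff.mp (hMdef.symm.trans hM0)
                  have hwV1 : w ∈ V1 := by rw [hV1Bb]; exact hwB
                  obtain ⟨w2, hw2, hdw2⟩ : ∃ w2, A w2 w ∧ 2 ≤ din A w2 := by
                    simp only [hV1def, Finset.mem_filter] at hwV1
                    exact hwV1.2
                  have : w2 ∈ Nin A w := mem_Nin.mpr hw2
                  rw [hNw] at this
                  rcases Finset.mem_insert.mp this with h | h
                  · have := hP1card uh huhP1
                    rw [← h] at this
                    omega
                  · have hw2xh : w2 = xh := Finset.mem_singleton.mp h
                    have hdxh : 2 ≤ din A xh := hw2xh ▸ hdw2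
                    have hxhB : xh ∈ Bb := hBbmem xh hdxh
                    have hmvxh : mv xh = 0 := hall xh hxhB
                    have hfullxh : ∀ q ∈ Pf, A q xh := by
                      intro q hq
                      have he : (Pf.filter fun u => ¬ A u xh) = ∅ := Finset.card_eq_zero.mp hmvxh
                      by_contra hq2
                      have hmem : q ∈ (Pf.filter fun u => ¬ A u xh) := Finset.mem_filter.mpr ⟨hq, hq2⟩
                      rw [he] at hmem
                      exact Finset.notMem_empty q hmem
                    have hAuhxh : A uh xh := hfullxh uh (hP1P huhP1)
                    exact ho xh uh hAxhuh hAuhxh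
                · have h1 : V1.card ≤ Bb.card := Finset.card_le_card hV1B
                  omega
              · obtain ⟨y, hyB, hyV1⟩ := Finset.not_subset.mp hVB
                have hss : V1 ⊂ Bb := (Finset.ssubset_iff_of_subset hV1B).mpr ⟨y, hyB, hyV1⟩
                have := Finset.card_lt_card hss
                omega
            · -- big case impossible
              exfalso
              obtain ⟨u', hu'P1, hu'ne⟩ := Finset.exists_mem_ne (s := P1) (by omega) uh
              have hNu' : Nin A u' = {w} := hP1S u' hu'P1 hu'ne
              have hwuh : w ≠ uh := by
                intro h
                have := hP1card uh huhP1
                rw [← h] at this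
                omega
              have hxhu' : xh ≠ u' := by
                intro h
                have h1 : A xh w := mem_Nin.mp (by
                  rw [hNw]; exact Finset.mem_insert.mpr (Or.inr (Finset.mem_singleton_self xh)))
                have h2 : A w u' := mem_Nin.mp (by rw [hNu']; exact Finset.mem_singleton_self w)
                rw [h] at h1
                exact ho u' w h1 h2
              exact hxhw (P3 ho hs (hAttack u' hu'P1) (hAttack uh huhP1) hu'ne hNu' hNuh
                hwuh hxhu').symm
  -- assemble
  have split : ∑ v, din A v = ∑ v ∈ Pf, din A v + ∑ v ∈ Bb, din A v := by
    rw [hPfdef, hBbdef]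
    exact (Finset.sum_filter_add_sum_filter_not _ _ _).symm
  have sumBb : ∑ v ∈ Bb, din A v + M = Bb.card * Pf.card + ∑ v ∈ Bb, cB v := by
    rw [hMdef, ← Finset.sum_add_distrib]
    rw [Finset.sum_congr rfl hident]
    rw [Finset.sum_add_distrib, Finset.sum_const, smul_eq_mul]
  have final1 : ∑ v, din A v ≤ Bb.card * Pf.card + max Bb.card Pf.card := by omega
  have final2 : Bb.card * Pf.card + max Bb.card Pf.card ≤ (n + 1) ^ 2 / 4 := by
    have key : ∀ x y : ℕ, x * y ≤ (x + y) ^ 2 / 4 := by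
      intro x y
      rw [Nat.le_div_iff_mul_le (by norm_num)]
      nlinarith [two_mul_le_add_sq x y]
    rcases le_total Bb.card Pf.card with h | h
    · have h1 : Bb.card * Pf.card + max Bb.card Pf.card = Pf.card * (Bb.card + 1) := by
        rw [max_eq_right h]; ring
      have h2 : Pf.card * (Bb.card + 1) ≤ (Pf.card + (Bb.card + 1)) ^ 2 / 4 := key _ _
      have h3 : Pf.card + (Bb.card + 1) = n + 1 := by omega
      rw [h1]
      rw [h3] at h2
      exact h2
    · have h1 : Bb.card * Pf.card + max Bb.card Pf.card = Bb.card * (Pf.card + 1) := by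
        rw [max_eq_left h]; ring
      have h2 : Bb.card * (Pf.card + 1) ≤ (Bb.card + (Pf.card + 1)) ^ 2 / 4 := key _ _
      have h3 : Bb.card + (Pf.card + 1) = n + 1 := by omega
      rw [h1]
      rw [h3] at h2
      exact h2
  omega

end ExOriAux

namespace ExOriAux2


lemma arcCount_eq_of_coe {n : ℕ} (A : Fin n → Fin n → Prop) (s : Finset (Fin n × Fin n))
    (h : ∀ p : Fin n × Fin n, p ∈ s ↔ A p.1 p.2) : arcCount A = s.card := by
  unfold arcCount
  have h2 : {p : Fin n × Fin n | A p.1 p.2} = ↑s := by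
    ext p
    simp only [Set.mem_setOf_eq, Finset.coe_sort_coe, Finset.mem_coe]
    exact (h p).symm
  rw [h2, Set.ncard_coe_finset]

theorem construction (n : ℕ) (hn : 16 ≤ n) :
    ∃ A : Fin n → Fin n → Prop,
      IsOriented A ∧ SFree A 2 ∧ arcCount A = (n + 1) ^ 2 / 4 := by
  set b : ℕ := (n + 1) / 2 with hbdef
  have hb3 : 3 ≤ b := by omega
  have hbn : b ≤ n := by omega
  have hbpos : 0 < b := by omega
  have hmod : ∀ x : ℕ, x < b →
      ((x + 1) % b = x + 1 ∧ x + 1 < b) ∨ (x + 1 = b ∧ (x + 1) % b = 0) := by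
    intro x hx
    rcases Nat.lt_or_ge (x + 1) b with h | h
    · exact Or.inl ⟨Nat.mod_eq_of_lt h, h⟩
    · have hxb : x + 1 = b := by omega
      exact Or.inr ⟨hxb, by rw [hxb, Nat.mod_self]⟩
  refine ⟨fun i j => (j : ℕ) < b ∧ (b ≤ (i : ℕ) ∨ ((i : ℕ) < b ∧ (j : ℕ) = ((i : ℕ) + 1) % b)),
    ?_, ?_, ?_⟩
  · -- oriented
    intro u v huv hvu
    obtain ⟨hv, h1⟩ := huv
    obtain ⟨hu, h2⟩ := hvu
    have h1' : (v : ℕ) = ((u : ℕ) + 1) % b := by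
      rcases h1 with h | h
      · omega
      · exact h.2
    have h2' : (u : ℕ) = ((v : ℕ) + 1) % b := by
      rcases h2 with h | h
      · omega
      · exact h.2
    rcases hmod u hu with ⟨e1, e2⟩ | ⟨e1, e2⟩ <;> rcases hmod v hv with ⟨f1, f2⟩ | ⟨f1, f2⟩ <;>
      omega
  · -- SFree
    intro v hcopy
    obtain ⟨u, w, hiu, _, _, _, _, haw, hau⟩ := hcopy
    have h0 : (u 0 : ℕ) < b := (haw 0).1
    have h1 : (u 1 : ℕ) < b := (haw 1).1
    have e0 : (v : ℕ) = ((u 0 : ℕ) + 1) % b := by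
      rcases (hau 0).2 with h | h
      · omega
      · exact h.2
    have e1 : (v : ℕ) = ((u 1 : ℕ) + 1) % b := by
      rcases (hau 1).2 with h | h
      · omega
      · exact h.2
    have : (u 0 : ℕ) = (u 1 : ℕ) := by
      rcases hmod (u 0) h0 with ⟨f1, f2⟩ | ⟨f1, f2⟩ <;>
        rcases hmod (u 1) h1 with ⟨g1, g2⟩ | ⟨g1, g2⟩ <;> omega
    have huu : u 0 = u 1 := Fin.ext this
    have : (0 : Fin 2) = 1 := hiu huu
    simp at this
  · -- count
    set Bf : Finset (Fin n) := Finset.univ.filter (fun j : Fin n => (j : ℕ) < b) with hBfdef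
    set Sf : Finset (Fin n) := Finset.univ.filter (fun j : Fin n => ¬ (j : ℕ) < b) with hSfdef
    have hBfcard : Bf.card = b := by
      have himg : (Finset.univ : Finset (Fin b)).map (Fin.castLEEmb hbn) = Bf := by
        ext j
        constructor
        · intro hj
          obtain ⟨i, -, rfl⟩ := Finset.mem_map.mp hj
          refine Finset.mem_filter.mpr ⟨Finset.mem_univ _, ?_⟩
          simpa using i.2
        · intro hj
          have hjb : (j : ℕ) < b := (Finset.mem_filter.mp hj).2
          refine Finset.mem_map.mpr ⟨⟨(j : ℕ), hjb⟩, Finset.mem_univ _, ?_⟩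
          ext
          simp
      rw [← himg, Finset.card_map, Finset.card_univ, Fintype.card_fin]
    have hSfcard : Sf.card = n - b := by
      have hpart : Bf.card + Sf.card = n := by
        rw [hBfdef, hSfdef, Finset.card_filter_add_card_filter_not]
        simp
      omega
    set g : Fin n → Fin n × Fin n :=
      fun i => (i, ⟨((i : ℕ) + 1) % b, lt_of_lt_of_le (Nat.mod_lt _ hbpos) hbn⟩) with hgdef
    set X : Finset (Fin n × Fin n) := Sf ×ˢ Bf with hXdef
    set Y : Finset (Fin n × Fin n) := Bf.image g with hYdef
    have hmem : ∀ p : Fin n × Fin n, p ∈ X ∪ Y ↔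
        ((p.2 : ℕ) < b ∧ (b ≤ (p.1 : ℕ) ∨ ((p.1 : ℕ) < b ∧ (p.2 : ℕ) = ((p.1 : ℕ) + 1) % b))) := by
      intro p
      rw [Finset.mem_union, hXdef, Finset.mem_product, hYdef, Finset.mem_image]
      constructor
      · rintro (⟨h1, h2⟩ | ⟨i, hi, hgi⟩)
        · have ha : ¬ (p.1 : ℕ) < b := (Finset.mem_filter.mp h1).2
          have hb2 : (p.2 : ℕ) < b := (Finset.mem_filter.mp h2).2
          exact ⟨hb2, Or.inl (by omega)⟩
        · have hib : (i : ℕ) < b := (Finset.mem_filter.mp hi).2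
          rw [hgdef] at hgi
          have hp1 : p.1 = i := by rw [← hgi]
          have hp2 : (p.2 : ℕ) = ((i : ℕ) + 1) % b := by rw [← hgi]
          have hlt : ((i : ℕ) + 1) % b < b := Nat.mod_lt _ hbpos
          refine ⟨by omega, Or.inr ⟨by rw [hp1]; exact hib, by rw [hp1]; exact hp2⟩⟩
      · rintro ⟨h2, h | ⟨h1, heq⟩⟩
        · exact Or.inl ⟨Finset.mem_filter.mpr ⟨Finset.mem_univ _, by omega⟩,
            Finset.mem_filter.mpr ⟨Finset.mem_univ _, h2⟩⟩
        · refine Or.inr ⟨p.1, Finset.mem_filter.mpr ⟨Finset.mem_univ _, h1⟩, ?_⟩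
          rw [hgdef]
          exact Prod.ext rfl (Fin.ext heq.symm)
    rw [arcCount_eq_of_coe _ (X ∪ Y) (fun p => hmem p)]
    have hXcard : X.card = (n - b) * b := by
      rw [hXdef, Finset.card_product, hSfcard, hBfcard]
    have hYcard : Y.card = b := by
      rw [hYdef, Finset.card_image_of_injective _ (fun a c h => congrArg Prod.fst h), hBfcard]
    have hdisj : Disjoint X Y := by
      rw [Finset.disjoint_left]
      intro p hpX hpY
      rw [hXdef, Finset.mem_product] at hpX
      have ha : ¬ (p.1 : ℕ) < b := (Finset.mem_filter.mp hpX.1).2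
      rw [hYdef, Finset.mem_image] at hpY
      obtain ⟨i, hi, hgi⟩ := hpY
      have hib : (i : ℕ) < b := (Finset.mem_filter.mp hi).2
      rw [hgdef] at hgi
      have hp1 : p.1 = i := by rw [← hgi]
      rw [hp1] at ha
      exact ha hib
    rw [Finset.card_union_of_disjoint hdisj, hXcard, hYcard]
    -- arithmetic
    rcases Nat.even_or_odd (n + 1) with ⟨k, hk⟩ | ⟨k, hk⟩
    · have hbk : b = k := by omega
      have hnb : n - b = k - 1 := by omega
      have hk8 : 8 ≤ k := by omega
      obtain ⟨m, rfl⟩ : ∃ m, k = m + 1 := ⟨k - 1, by omega⟩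
      rw [hnb, hbk, hk]
      have h1 : (m + 1 + (m + 1)) ^ 2 = 4 * ((m + 1) * (m + 1)) := by ring
      rw [h1, Nat.mul_div_cancel_left _ (by norm_num : 0 < 4)]
      have h2 : m + 1 - 1 = m := by omega
      rw [h2]
      ring
    · have hbk : b = k := by omega
      have hnb : n - b = k := by omega
      rw [hnb, hbk, hk]
      have h1 : (2 * k + 1) ^ 2 = 4 * (k * k + k) + 1 := by ring
      rw [h1, Nat.mul_add_div (by norm_num : 0 < 4)]
      norm_num


lemma upper_arcCount {n : ℕ} (A : Fin n → Fin n → Prop) (hn : 16 ≤ n)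
    (ho : IsOriented A) (hs : SFree A 2) : arcCount A ≤ (n + 1) ^ 2 / 4 := by
  have h1 : arcCount A = (Finset.univ.filter fun p : Fin n × Fin n => A p.1 p.2).card :=
    arcCount_eq_of_coe A _ (fun p => by simp)
  rw [h1, ExOriAux.card_pairs]
  exact ExOriAux.upper A hn ho hs

end ExOriAux2

/-- For every `n ≥ 16` there is an `S_{2,1}`-free oriented graph on
`n` vertices with exactly `⌊(n+1)²/4⌋` arcs; hence `ex_ori(n, S_{2,1}) = ⌊(n+1)²/4⌋`,
i.e. `⌊(n+1)²/4⌋` is attained and is an upper bound for the number of arcs of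
every `S_{2,1}`-free oriented graph on `n` vertices. -/
theorem exOri_S21 (n : ℕ) (hn : 16 ≤ n) :
    (∃ A : Fin n → Fin n → Prop,
        IsOriented A ∧ SFree A 2 ∧ arcCount A = (n + 1) ^ 2 / 4) ∧
    (∀ A : Fin n → Fin n → Prop,
        IsOriented A → SFree A 2 → arcCount A ≤ (n + 1) ^ 2 / 4) := by
  exact ⟨ExOriAux2.construction n hn, fun A ho hs => ExOriAux2.upper_arcCount A hn ho hs⟩
end

section
/- Let n ≥ 16 and let D be an S_{2,1}-free oriented graph on n vertices with exactly ⌊(n+1)²/4⌋ arcs. Then the vertex set of D admits a partition V(D) = X ∪ Y such that: (i) |X| ∈ {⌊(n−1)/2⌋, ⌈(n−1)/2⌉}; (ii) x→y is an arc for every x ∈ X and y ∈ Y; (iii) there are no arcs between two vertices of X, and the subdigraph induced on Y is in-degree 1-regular (every y ∈ Y has exactly one in-neighbor inside Y); moreover these are all the arcs of D. -/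
open Finset

section ExS21aux

variable {V : Type*} [Fintype V] [DecidableEq V] (A : V → V → Prop) [DecidableRel A]

/-- in-neighbourhood as a Finset -/
def ExNbr (v : V) : Finset V := Finset.univ.filter (fun u => A u v)

variable {A}

lemma ExS21.mem_Nbr {u v : V} : u ∈ ExNbr A v ↔ A u v := by simp [ExNbr]

lemma ExS21.inDeg_eq (v : V) : inDeg A v = (ExNbr A v).card := by
  have : {u : V | A u v} = ↑(ExNbr A v) := by ext u; simp [ExNbr]
  rw [inDeg, this, Set.ncard_coe_finset]

lemma ExS21.arcCount_eq : arcCount A = ∑ v, (ExNbr A v).card := by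
  have h1 : {p : V × V | A p.1 p.2} = ↑(Finset.univ.filter (fun p : V × V => A p.1 p.2)) := by
    ext p; simp
  rw [arcCount, h1, Set.ncard_coe_finset]
  rw [Finset.card_eq_sum_card_fiberwise (f := Prod.snd) (t := Finset.univ)
    (fun x _ => Finset.mem_univ _)]
  refine Finset.sum_congr rfl (fun v _ => ?_)
  refine Finset.card_bij' (fun p _ => p.1) (fun u _ => (u, v)) ?_ ?_ ?_ ?_
  · intro p hp
    simp only [Finset.mem_filter, Finset.mem_univ, true_and] at hp
    simp [ExNbr, hp.2 ▸ hp.1]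
  · intro u hu
    simp only [ExS21.mem_Nbr] at hu
    simp [hu]
  · intro p hp
    simp only [Finset.mem_filter, Finset.mem_univ, true_and] at hp
    exact Prod.ext rfl hp.2.symm
  · intro u hu; rfl

variable (hori : IsOriented A) (hfree : SFree A 2)

include hori in
lemma ExS21.irrefl (v : V) : ¬ A v v := fun h => hori v v h h

include hori hfree in
lemma ExS21.keyA {v u1 u2 w1 w2 : V} (h1 : A u1 v) (h2 : A u2 v) (h12 : u1 ≠ u2)
    (hw1 : A w1 u1) (hw1u2 : w1 ≠ u2) (hw2 : A w2 u2) : w2 = u1 ∨ w2 = w1 := by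
  by_contra hcon
  push_neg at hcon
  obtain ⟨hw2u1, hw2w1⟩ := hcon
  have irr : ∀ x : V, ¬ A x x := ExS21.irrefl hori
  have hu1v : u1 ≠ v := fun h => irr v (h ▸ h1)
  have hu2v : u2 ≠ v := fun h => irr v (h ▸ h2)
  have hw1v : w1 ≠ v := fun h => hori u1 v h1 (h ▸ hw1)
  have hw2v : w2 ≠ v := fun h => hori u2 v h2 (h ▸ hw2)
  have hw1u1 : w1 ≠ u1 := fun h => irr u1 (h ▸ hw1)
  have hw2u2 : w2 ≠ u2 := fun h => irr u2 (h ▸ hw2)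
  refine hfree v ⟨![u1, u2], ![w1, w2], ?_, ?_, ?_, ?_, ?_, ?_, ?_⟩
  · intro i j hij
    fin_cases i <;> fin_cases j <;> simp_all
  · intro i j hij
    fin_cases i <;> fin_cases j <;> simp_all
  · intro i j
    fin_cases i <;> fin_cases j <;>
      simp_all [eq_comm, Ne, hw1u1.symm, hw2u1.symm, hw1u2.symm, hw2u2.symm]
  · intro i; fin_cases i <;> simpa
  · intro i; fin_cases i <;> simpa
  · intro i; fin_cases i <;> simpa
  · intro i; fin_cases i <;> simpa

include hori hfree in
/-- half of Claim 1 -/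
lemma ExS21.claim1_half {v u1 u2 : V} (h1 : A u1 v) (h2 : A u2 v) (h12 : u1 ≠ u2)
    (d1 : 2 ≤ (ExNbr A u1).card) (d2 : 2 ≤ (ExNbr A u2).card) : A u1 u2 := by
  have hns : ¬ ExNbr A u1 ⊆ {u2} := by
    intro hsub
    have := Finset.card_le_card hsub
    simp only [Finset.card_singleton] at this
    omega
  obtain ⟨w1, hw1mem, hw1nm⟩ := Finset.not_subset.mp hns
  have hw1u2 : w1 ≠ u2 := by simpa using hw1nm
  have hw1 : A w1 u1 := ExS21.mem_Nbr.mp hw1mem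
  have hw1u1 : w1 ≠ u1 := fun h => ExS21.irrefl hori u1 (h ▸ hw1)
  have hsub : ExNbr A u2 ⊆ {u1, w1} := by
    intro z hz
    rcases ExS21.keyA hori hfree h1 h2 h12 hw1 hw1u2 (ExS21.mem_Nbr.mp hz) with h | h <;>
      simp [h]
  have : ExNbr A u2 = {u1, w1} := by
    apply Finset.eq_of_subset_of_card_le hsub
    calc ({u1, w1} : Finset V).card ≤ 2 := Finset.card_insert_le _ _ |>.trans (by simp)
      _ ≤ _ := d2
  have : u1 ∈ ExNbr A u2 := by rw [this]; simp
  exact ExS21.mem_Nbr.mp this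

include hori hfree in
/-- Claim 1: any vertex has at most one in-neighbour of in-degree ≥ 2. -/
lemma ExS21.claim1 {v u1 u2 : V} (h1 : A u1 v) (h2 : A u2 v)
    (d1 : 2 ≤ (ExNbr A u1).card) (d2 : 2 ≤ (ExNbr A u2).card) : u1 = u2 := by
  by_contra h12
  exact hori u1 u2 (ExS21.claim1_half hori hfree h1 h2 h12 d1 d2)
    (ExS21.claim1_half hori hfree h2 h1 (Ne.symm h12) d2 d1)

include hori hfree in
/-- S1: if `u → v`, `u' → v`, `N(u) = {w}`, `u' ∉ {u, w}`, then `N(u') ⊆ {u, w}`. -/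
lemma ExS21.s1 {v u u' w : V} (h1 : A u v) (h2 : A u' v) (hN : ExNbr A u = {w})
    (h12 : u' ≠ u) (h1w : u' ≠ w) {z : V} (hz : A z u') : z = u ∨ z = w := by
  have hwu : A w u := ExS21.mem_Nbr.mp (by rw [hN]; simp)
  exact ExS21.keyA hori hfree h1 h2 (Ne.symm h12) hwu (Ne.symm h1w) hz

end ExS21aux

/-- Claim C : structure of the "in-neighbour function" on a set of
in-degree-one vertices. -/
lemma ExS21.claimC {V : Type*} [DecidableEq V] (T : Finset V) (f : V → V)
    (hT4 : 4 ≤ T.card)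
    (hpair : ∀ t1 ∈ T, ∀ t2 ∈ T, t1 ≠ t2 → f t1 = t2 ∨ f t2 = t1 ∨ f t1 = f t2)
    (h2cyc : ∀ t1 ∈ T, ∀ t2 ∈ T, f t1 = t2 → f t2 ≠ t1) :
    ∃ w₀, ∀ t ∈ T, t ≠ w₀ → f t = w₀ := by
  by_cases hex : ∃ t1 ∈ T, ∃ t2 ∈ T, t1 ≠ t2 ∧ f t1 = t2
  · obtain ⟨t1, ht1, t2, ht2, h12, hf1⟩ := hex
    refine ⟨t2, ?_⟩
    -- first: every t ∈ T \ {t1, t2} has f t = t1 or f t = t2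
    have first : ∀ t ∈ T, t ≠ t1 → t ≠ t2 → f t = t1 ∨ f t = t2 := by
      intro t ht htne1 htne2
      rcases hpair t1 ht1 t ht (fun h => htne1 h.symm) with h | h | h
      · exact absurd (hf1.symm.trans h) (Ne.symm htne2)
      · exact Or.inl h
      · exact Or.inr (h.symm.trans hf1)
    -- second: no t ∈ T \ {t1, t2} has f t = t1
    have second : ∀ t ∈ T, t ≠ t1 → t ≠ t2 → f t ≠ t1 := by
      intro t3 ht3 h31 h32 hf3
      have hf2 : f t2 = t3 := by
        rcases hpair t2 ht2 t3 ht3 (fun h => h32 h.symm) with h | h | h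
        · exact h
        · exact absurd (hf3.symm.trans h) h12
        · exact absurd (h.trans hf3) (h2cyc t1 ht1 t2 ht2 hf1)
      -- find a fourth element
      have h4 : (T \ {t1, t2, t3}).Nonempty := by
        rw [← Finset.card_pos]
        have h1 := Finset.le_card_sdiff ({t1, t2, t3} : Finset V) T
        have h2 : ({t1, t2, t3} : Finset V).card ≤ 3 := by
          apply (Finset.card_insert_le _ _).trans
          have := Finset.card_insert_le t2 ({t3} : Finset V)
          simp at this ⊢; omega
        omega
      obtain ⟨t4, ht4⟩ := h4
      simp only [Finset.mem_sdiff, Finset.mem_insert, Finset.mem_singleton, not_or] at ht4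
      obtain ⟨ht4T, h41, h42, h43⟩ := ht4
      have c1 : f t4 = t1 ∨ f t4 = t2 := first t4 ht4T h41 h42
      have c2 : f t4 = t2 ∨ f t4 = t3 := by
        rcases hpair t2 ht2 t4 ht4T (fun h => h42 h.symm) with h | h | h
        · exact absurd (hf2.symm.trans h) (Ne.symm h43)
        · exact Or.inl h
        · exact Or.inr (h.symm.trans hf2)
      have c3 : f t4 = t3 ∨ f t4 = t1 := by
        rcases hpair t3 ht3 t4 ht4T (fun h => h43 h.symm) with h | h | h
        · exact absurd (hf3.symm.trans h) (Ne.symm h41)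
        · exact Or.inl h
        · exact Or.inr (h.symm.trans hf3)
      -- t1, t2, t3 pairwise distinct
      have h13 : t1 ≠ t3 := fun h => h31 h.symm
      have h23 : t2 ≠ t3 := fun h => h32 h.symm
      rcases c1 with h | h
      · rcases c2 with h' | h'
        · exact h12 (h.symm.trans h')
        · exact h13 (h.symm.trans h')
      · rcases c3 with h' | h'
        · exact h23 (h.symm.trans h')
        · exact h12 ((h'.symm.trans h).symm).symm
    intro t ht htne
    by_cases h : t = t1
    · exact h ▸ hf1
    · rcases first t ht h htne with h' | h'
      · exact absurd h' (second t ht h htne)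
      · exact h'
  · push_neg at hex
    -- all pairs have equal f-values
    obtain ⟨t0, ht0⟩ := Finset.card_pos.mp (by omega : 0 < T.card)
    refine ⟨f t0, fun t ht _ => ?_⟩
    by_cases h : t = t0
    · rw [h]
    · rcases hpair t ht t0 ht0 h with h' | h' | h'
      · exact absurd h' (hex t ht t0 ht0 h)
      · exact absurd h' (hex t0 ht0 t ht (Ne.symm h))
      · exact h'

lemma ExS21.amgm (p q n : ℕ) (h : p + q = n + 1) : p * q ≤ (n + 1) ^ 2 / 4 := by
  rw [Nat.le_div_iff_mul_le (by norm_num)]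
  zify
  have h' : (p : ℤ) + q = (n : ℤ) + 1 := by exact_mod_cast h
  nlinarith [sq_nonneg ((p : ℤ) - q)]

lemma ExS21.eqsplit (b l n : ℕ) (hb : b * (l + 1) = (n + 1) ^ 2 / 4)
    (hbl : b + l = n) : l = (n - 1) / 2 ∨ l = n / 2 := by
  have hdm := Nat.div_add_mod ((n + 1) ^ 2) 4
  have hmod : (n + 1) ^ 2 % 4 = 0 ∨ (n + 1) ^ 2 % 4 = 1 := by
    rcases Nat.even_or_odd (n + 1) with ⟨m, hm⟩ | ⟨m, hm⟩
    · left
      have : (n + 1) ^ 2 = 4 * (m * m) := by rw [hm]; ring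
      omega
    · right
      have : (n + 1) ^ 2 = 4 * (m * m + m) + 1 := by rw [hm]; ring
      omega
  -- (b - l - 1)^2 ≤ 1 in ℤ
  have hsq : ((b : ℤ) - l - 1) ^ 2 ≤ 1 := by
    have h1 : ((b : ℤ) + (l + 1)) = (n : ℤ) + 1 := by exact_mod_cast by omega
    have h2 : ((n : ℤ) + 1) ^ 2 - 4 * (b * (l + 1)) ≤ 1 := by
      have : (4 : ℤ) * ((n + 1) ^ 2 / 4 : ℕ) + 1 ≥ ((n : ℤ) + 1) ^ 2 := by
        exact_mod_cast by omega
      have hb' : ((b : ℤ) * (l + 1)) = (((n + 1) ^ 2 / 4 : ℕ) : ℤ) := by exact_mod_cast hb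
      nlinarith
    nlinarith
  have habs : (b : ℤ) - l - 1 ≤ 1 ∧ -1 ≤ (b : ℤ) - l - 1 := by
    constructor <;> nlinarith [sq_nonneg ((b : ℤ) - l - 1)]
  have h1 : (b : ℤ) ≤ l + 2 := by linarith [habs.1]
  have h2 : (l : ℤ) ≤ b := by linarith [habs.2]
  have h1' : b ≤ l + 2 := by exact_mod_cast h1
  have h2' : l ≤ b := by exact_mod_cast h2
  omega


lemma ExS21.count1 (M b l k fc dc r s : ℕ) (h1 : M = s + k)
    (h2 : s ≤ fc * (l + 1) + dc * 2 + r * l) (h3 : r + fc + dc = b) (h4 : 1 ≤ dc)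
    (h5 : k + 2 ≤ l) (h6 : b * (l + 1) ≤ M) : False := by
  have hfc : fc = b - r - dc := by omega
  zify at *
  have hfc' : (fc : ℤ) = b - r - dc := by omega
  nlinarith [mul_nonneg (by linarith : (0:ℤ) ≤ (dc:ℤ) - 1) (by linarith : (0:ℤ) ≤ (l:ℤ) - 1)]

lemma ExS21.count2 (M b l k fc dw r s e : ℕ) (h1 : M = s + k)
    (h2 : s ≤ fc * (l + 1) + dw + r * l) (h3 : r + fc + 1 = b) (h4 : dw + k ≤ l + e)
    (h5 : fc + 1 + e ≤ b) (h6 : b * (l + 1) ≤ M) : False := by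
  zify at *
  have hfc' : (fc : ℤ) = b - r - 1 := by omega
  nlinarith

lemma ExS21.count3 (M b l fc dc dw r s : ℕ) (h1 : M = s + 1)
    (h2 : s ≤ fc * (l + 1) + dc * 2 + dw + r * l) (h3 : r + fc + dc + 1 = b)
    (h4 : dw ≤ l) (h5 : 1 ≤ dc) (h6 : 5 ≤ l) (h7 : b * (l + 1) ≤ M) : False := by
  zify at *
  have hfc' : (fc : ℤ) = b - r - dc - 1 := by omega
  nlinarith [mul_nonneg (by linarith : (0:ℤ) ≤ (dc:ℤ) - 1) (by linarith : (0:ℤ) ≤ (l:ℤ) - 1)]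

set_option maxHeartbeats 1600000

/-- structure of the extremal `S_{2,1}`-free oriented graphs on
`n ≥ 16` vertices with exactly `⌊(n+1)²/4⌋` arcs.  (In ℕ, `⌊(n-1)/2⌋ = (n-1)/2`
and `⌈(n-1)/2⌉ = n/2`.) -/
theorem extremal_S21_structure {V : Type*} [Fintype V] (A : V → V → Prop)
    (n : ℕ) (hn : 16 ≤ n) (hcard : Fintype.card V = n)
    (hori : IsOriented A) (hfree : SFree A 2)
    (harcs : arcCount A = (n + 1) ^ 2 / 4) :
    ∃ X Y : Set V,
      X ∪ Y = Set.univ ∧ Disjoint X Y ∧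
      (X.ncard = (n - 1) / 2 ∨ X.ncard = n / 2) ∧
      (∀ x ∈ X, ∀ y ∈ Y, A x y) ∧
      (∀ x ∈ X, ∀ x' ∈ X, ¬ A x x') ∧
      (∀ y ∈ Y, {z : V | z ∈ Y ∧ A z y}.ncard = 1) ∧
      (∀ u v : V, A u v → (u ∈ X ∧ v ∈ Y) ∨ (u ∈ Y ∧ v ∈ Y)) := by
  letI : DecidableEq V := Classical.decEq V
  letI : DecidableRel A := fun _ _ => Classical.propDecidable _
  set M := (n + 1) ^ 2 / 4 with hMdef
  set d : V → ℕ := fun v => (ExNbr A v).card with hddef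
  set L : Finset V := Finset.univ.filter (fun v => d v ≤ 1) with hLdef
  set B : Finset V := Finset.univ.filter (fun v => ¬ d v ≤ 1) with hBdef
  set K : Finset V := Finset.univ.filter (fun v => d v = 1) with hKdef
  have hmemL : ∀ v, v ∈ L ↔ d v ≤ 1 := fun v => by simp [hLdef]
  have hmemB : ∀ v, v ∈ B ↔ 2 ≤ d v := fun v => by simp [hBdef]; omega
  have hmemK : ∀ v, v ∈ K ↔ d v = 1 := fun v => by simp [hKdef]
  have hirr : ∀ v : V, ¬ A v v := ExS21.irrefl hori
  -- cardinalities
  have hLB : L.card + B.card = n := by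
    rw [hLdef, hBdef, Finset.card_filter_add_card_filter_not, Finset.card_univ, hcard]
  have hKsubL : K ⊆ L := fun v hv => (hmemL v).mpr (by have := (hmemK v).mp hv; omega)
  -- the total sum of in-degrees
  have hMsum : ∑ v ∈ L, d v + ∑ v ∈ B, d v = M := by
    rw [hLdef, hBdef, Finset.sum_filter_add_sum_filter_not]
    rw [← harcs, ExS21.arcCount_eq]
  have hkK : ∑ v ∈ L, d v = K.card := by
    rw [← Finset.sum_subset hKsubL (fun x hx hnx => by
      have h1 := (hmemL x).mp hx
      have h2 : ¬ d x = 1 := fun h => hnx ((hmemK x).mpr h)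
      omega)]
    rw [Finset.sum_congr rfl (fun x hx => (hmemK x).mp hx), Finset.sum_const, smul_eq_mul,
      mul_one]
  -- in-neighbourhood decomposition
  have hsplit : ∀ v : V, ((ExNbr A v).filter (fun u => d u ≤ 1)).card
      + ((ExNbr A v).filter (fun u => ¬ d u ≤ 1)).card = d v := by
    intro v
    rw [hddef]
    exact Finset.card_filter_add_card_filter_not _
  have hLpart : ∀ v : V, (ExNbr A v).filter (fun u => d u ≤ 1) ⊆ L := by
    intro v u hu
    rw [Finset.mem_filter] at hu
    exact (hmemL u).mpr hu.2
  have hBpart : ∀ v : V, ((ExNbr A v).filter (fun u => ¬ d u ≤ 1)).card ≤ 1 := by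
    intro v
    apply Finset.card_le_one.mpr
    intro a ha b hb
    rw [Finset.mem_filter] at ha hb
    have ha2 : 2 ≤ d a := by have := ha.2; omega
    have hb2 : 2 ≤ d b := by have := hb.2; omega
    exact ExS21.claim1 hori hfree (ExS21.mem_Nbr.mp ha.1) (ExS21.mem_Nbr.mp hb.1) ha2 hb2
  have hdle : ∀ v : V, d v ≤ L.card + 1 := by
    intro v
    have h1 := hsplit v
    have h2 := Finset.card_le_card (hLpart v)
    have h3 := hBpart v
    omega
  -- the in-neighbour function on degree-one vertices
  set f : V → V := fun u => if h : ∃ w, ExNbr A u = {w} then h.choose else u with hfdef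
  have hfspec : ∀ u : V, d u = 1 → ExNbr A u = {f u} := by
    intro u hu
    have h : ∃ w, ExNbr A u = {w} := Finset.card_eq_one.mp hu
    rw [hfdef]
    simp only [dif_pos h]
    exact h.choose_spec
  have hfA : ∀ u : V, d u = 1 → A (f u) u := by
    intro u hu
    have := hfspec u hu
    exact ExS21.mem_Nbr.mp (this ▸ Finset.mem_singleton_self _)
  have hfuniq : ∀ u : V, d u = 1 → ∀ z, A z u → z = f u := by
    intro u hu z hz
    have := hfspec u hu
    have hz' : z ∈ ExNbr A u := ExS21.mem_Nbr.mpr hz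
    rw [this, Finset.mem_singleton] at hz'
    exact hz'
  have hfne : ∀ u : V, d u = 1 → f u ≠ u := by
    intro u hu h
    have := hfA u hu
    rw [h] at this
    exact hirr u this
  -- pairwise structure of degree-one in-neighbours of a common vertex
  have hpairgen : ∀ v : V, ∀ t1, A t1 v → ∀ t2, A t2 v → d t1 = 1 → d t2 = 1 → t1 ≠ t2 →
      f t1 = t2 ∨ f t2 = t1 ∨ f t1 = f t2 := by
    intro v t1 h1 t2 h2 hd1 hd2 h12
    by_cases hft : f t1 = t2
    · exact Or.inl hft
    · rcases ExS21.s1 hori hfree h1 h2 (hfspec t1 hd1) (Ne.symm h12) (fun h => hft h.symm)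
        (hfA t2 hd2) with h | h
      · exact Or.inr (Or.inl h)
      · exact Or.inr (Or.inr h.symm)
  -- full vertices
  have hFstruct : ∀ v : V, d v = L.card + 1 → (L ⊆ ExNbr A v ∧
      ∃ x, A x v ∧ 2 ≤ d x ∧ ∀ z, A z v → 2 ≤ d z → z = x) := by
    intro v hv
    have h1 := hsplit v
    have h2 := Finset.card_le_card (hLpart v)
    have h3 := hBpart v
    have hcL : ((ExNbr A v).filter (fun u => d u ≤ 1)).card = L.card := by omega
    have hcB : ((ExNbr A v).filter (fun u => ¬ d u ≤ 1)).card = 1 := by omega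
    constructor
    · have := Finset.eq_of_subset_of_card_le (hLpart v) (le_of_eq hcL.symm)
      rw [← this]
      exact Finset.filter_subset _ _
    · obtain ⟨x, hx⟩ := Finset.card_eq_one.mp hcB
      have hxm : x ∈ (ExNbr A v).filter (fun u => ¬ d u ≤ 1) := hx ▸ Finset.mem_singleton_self _
      rw [Finset.mem_filter] at hxm
      refine ⟨x, ExS21.mem_Nbr.mp hxm.1, by have := hxm.2; omega, fun z hz hdz => ?_⟩
      have : z ∈ (ExNbr A v).filter (fun u => ¬ d u ≤ 1) := by
        rw [Finset.mem_filter]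
        exact ⟨ExS21.mem_Nbr.mpr hz, by omega⟩
      rw [hx, Finset.mem_singleton] at this
      exact this
  have hBL1 : B.card * (L.card + 1) ≤ M := ExS21.amgm _ _ _ (by omega)
  have hLB1 : L.card * (B.card + 1) ≤ M := ExS21.amgm _ _ _ (by omega)
  have hM3 : (n + 1) ^ 2 ≤ 4 * M + 3 := by
    have := Nat.div_add_mod ((n + 1) ^ 2) 4
    have := Nat.mod_lt ((n + 1) ^ 2) (show 0 < 4 by norm_num)
    omega
  by_cases hK0 : K = ∅
  -- ===================== MAIN CASE: no vertex of in-degree 1 =====================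
  · have hL0 : ∀ u ∈ L, d u = 0 := by
      intro u hu
      have h1 := (hmemL u).mp hu
      have h2 : ¬ d u = 1 := fun h => by rw [← hmemK u, hK0] at h; exact absurd h (by simp)
      omega
    have hsum0 : ∑ v ∈ L, d v = 0 := by rw [hkK, hK0]; simp
    have hMB : ∑ v ∈ B, d v = M := by omega
    have hBd : ∑ v ∈ B, d v ≤ B.card * (L.card + 1) := by
      calc ∑ v ∈ B, d v ≤ B.card • (L.card + 1) :=
            Finset.sum_le_card_nsmul _ _ _ (fun v _ => hdle v)
        _ = B.card * (L.card + 1) := by rw [smul_eq_mul]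
    have hEq : B.card * (L.card + 1) = M := le_antisymm hBL1 (by omega)
    have hfull : ∀ v ∈ B, d v = L.card + 1 := by
      by_contra hcon
      push_neg at hcon
      obtain ⟨v0, hv0B, hv0⟩ := hcon
      have hlt : ∑ v ∈ B, d v < ∑ v ∈ B, (L.card + 1) := by
        apply Finset.sum_lt_sum (fun v _ => hdle v) ⟨v0, hv0B, by have := hdle v0; omega⟩
      rw [Finset.sum_const, smul_eq_mul] at hlt
      omega
    refine ⟨(↑L : Set V), (↑B : Set V), ?_, ?_, ?_, ?_, ?_, ?_, ?_⟩
    · ext v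
      simp only [Set.mem_union, Finset.coe_sort_coe, Set.mem_univ, iff_true, Finset.mem_coe]
      by_cases h : d v ≤ 1
      · exact Or.inl ((hmemL v).mpr h)
      · exact Or.inr ((hmemB v).mpr (by omega))
    · rw [Set.disjoint_left]
      intro v hvL hvB
      have := (hmemL v).mp hvL
      have := (hmemB v).mp hvB
      omega
    · rw [Set.ncard_coe_finset]
      exact ExS21.eqsplit B.card L.card n hEq (by omega)
    · intro x hx y hy
      have := (hFstruct y (hfull y hy)).1 hx
      exact ExS21.mem_Nbr.mp this
    · intro x hx x' hx' hA
      have h0 := hL0 x' hx'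
      have : x ∈ ExNbr A x' := ExS21.mem_Nbr.mpr hA
      have : 0 < d x' := Finset.card_pos.mpr ⟨x, this⟩
      omega
    · intro y hy
      obtain ⟨x, hxA, hxd, hxu⟩ := (hFstruct y (hfull y hy)).2
      have hset : {z : V | z ∈ (↑B : Set V) ∧ A z y} = {x} := by
        ext z
        simp only [Set.mem_setOf_eq, Finset.coe_sort_coe, Finset.mem_coe, Set.mem_singleton_iff]
        constructor
        · rintro ⟨hz1, hz2⟩
          exact hxu z hz2 ((hmemB z).mp hz1)
        · rintro rfl
          exact ⟨(hmemB z).mpr hxd, hxA⟩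
      rw [hset, Set.ncard_singleton]
    · intro u v hA
      have hvB : v ∈ B := by
        rw [hmemB v]
        by_contra h
        have hvL : v ∈ L := (hmemL v).mpr (by omega)
        have : 0 < d v := Finset.card_pos.mpr ⟨u, ExS21.mem_Nbr.mpr hA⟩
        have := hL0 v hvL
        omega
      by_cases h : d u ≤ 1
      · exact Or.inl ⟨(hmemL u).mpr h, hvB⟩
      · exact Or.inr ⟨(hmemB u).mpr (by omega), hvB⟩
  -- ===================== CONTRADICTION CASE: some vertex of in-degree 1 =====================
  · exfalso
    obtain ⟨u0, hu0K⟩ := Finset.nonempty_iff_ne_empty.mpr hK0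
    have hkL : K.card ≤ L.card := Finset.card_le_card hKsubL
    have hMeq : M = ∑ v ∈ B, d v + K.card := by omega
    have hsBle : ∑ v ∈ B, d v ≤ B.card * (L.card + 1) := by
      calc ∑ v ∈ B, d v ≤ B.card • (L.card + 1) :=
            Finset.sum_le_card_nsmul _ _ _ (fun v _ => hdle v)
        _ = B.card * (L.card + 1) := by rw [smul_eq_mul]
    -- lower bounds on |L| and |B|
    have hkey : ((B.card : ℤ) - L.card - 1) ^ 2 ≤ 4 * L.card + 3 := by
      have h1 : M ≤ B.card * (L.card + 1) + L.card := by omega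
      have h2 : ((B.card : ℤ) + ((L.card : ℤ) + 1)) = (n : ℤ) + 1 := by exact_mod_cast by omega
      have h3 : ((n : ℤ) + 1) ^ 2 ≤ 4 * M + 3 := by exact_mod_cast hM3
      have h4 : (M : ℤ) ≤ (B.card : ℤ) * ((L.card : ℤ) + 1) + (L.card : ℤ) := by exact_mod_cast h1
      nlinarith
    have hl5 : 5 ≤ L.card := by
      by_contra h
      push_neg at h
      have hb : (B.card : ℤ) = (n : ℤ) - L.card := by
        have : (L.card : ℤ) + B.card = n := by exact_mod_cast hLB
        linarith
      have hL4 : (L.card : ℤ) ≤ 4 := by exact_mod_cast by omega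
      have hn' : (16 : ℤ) ≤ n := by exact_mod_cast hn
      nlinarith [hkey]
    have hb5 : 5 ≤ B.card := by
      by_contra h
      push_neg at h
      have hl : (L.card : ℤ) = (n : ℤ) - B.card := by
        have : (L.card : ℤ) + B.card = n := by exact_mod_cast hLB
        linarith
      have hB4 : (B.card : ℤ) ≤ 4 := by exact_mod_cast by omega
      have hLn : (L.card : ℤ) ≤ n := by
        have := hLB; exact_mod_cast by omega
      have hn' : (16 : ℤ) ≤ n := by exact_mod_cast hn
      nlinarith [hkey]
    set F : Finset V := B.filter (fun v => d v = L.card + 1) with hFdef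
    have hmemF : ∀ v, v ∈ F ↔ (2 ≤ d v ∧ d v = L.card + 1) := by
      intro v
      rw [hFdef, Finset.mem_filter, hmemB v]
    have hFsubB : F ⊆ B := Finset.filter_subset _ _
    have hnotF : ∀ v ∈ B, v ∉ F → d v ≤ L.card := by
      intro v hvB hvF
      have h1 := hdle v
      have h2 : ¬ d v = L.card + 1 := fun h => hvF ((hmemF v).mpr ⟨(hmemB v).mp hvB, h⟩)
      omega
    have h2cycgen : ∀ (S : Finset V), (∀ t ∈ S, d t = 1) →
        ∀ t1 ∈ S, ∀ t2 ∈ S, f t1 = t2 → f t2 ≠ t1 := by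
      intro S hS t1 ht1 t2 ht2 he hc
      have a1 := hfA t1 (hS t1 ht1)
      rw [he] at a1
      have a2 := hfA t2 (hS t2 ht2)
      rw [hc] at a2
      exact hori _ _ a1 a2
    by_cases hF0 : F = ∅
    -- ------------- Subcase A : no full vertex -------------
    · have hnF : ∀ v ∈ B, d v ≤ L.card := fun v hv => hnotF v hv (by rw [hF0]; simp)
      have hsBd : ∑ v ∈ B, d v ≤ B.card * L.card := by
        calc ∑ v ∈ B, d v ≤ B.card • L.card := Finset.sum_le_card_nsmul _ _ _ hnF
          _ = B.card * L.card := by rw [smul_eq_mul]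
      have hring : L.card * (B.card + 1) = B.card * L.card + L.card := by ring
      have hkeq : K.card = L.card := by omega
      have hsBeq : ∑ v ∈ B, d v = B.card * L.card := by omega
      have hallL : ∀ u ∈ L, d u = 1 := by
        have hKL : K = L := Finset.eq_of_subset_of_card_le hKsubL (by omega)
        intro u hu
        rw [← hKL] at hu
        exact (hmemK u).mp hu
      have hallB : ∀ v ∈ B, d v = L.card := by
        by_contra hcon
        push_neg at hcon
        obtain ⟨v0, hv0B, hv0⟩ := hcon
        have hlt : ∑ v ∈ B, d v < ∑ v ∈ B, L.card := by
          apply Finset.sum_lt_sum hnF ⟨v0, hv0B, by have := hnF v0 hv0B; omega⟩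
        rw [Finset.sum_const, smul_eq_mul] at hlt
        omega
      have hnoBB : ∀ v ∈ B, ∀ x, A x v → d x ≤ 1 := by
        intro v hvB x hxA
        by_contra hx
        push_neg at hx
        set T := (ExNbr A v).filter (fun u => d u ≤ 1) with hTdef
        have hTsubL : T ⊆ L := hLpart v
        have hTcard : L.card ≤ T.card + 1 := by
          have h1 := hsplit v
          have h2 := hBpart v
          have h3 := hallB v hvB
          rw [← hTdef] at h1
          omega
        have hTd1 : ∀ t ∈ T, d t = 1 := fun t ht => hallL t (hTsubL ht)
        have hTA : ∀ t ∈ T, A t v := fun t ht => ExS21.mem_Nbr.mp (Finset.mem_filter.mp ht).1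
        obtain ⟨w0, hw0⟩ := ExS21.claimC T f (by omega)
          (fun t1 ht1 t2 ht2 h12 => hpairgen v t1 (hTA t1 ht1) t2 (hTA t2 ht2)
            (hTd1 t1 ht1) (hTd1 t2 ht2) h12)
          (h2cycgen T hTd1)
        have herase : 2 ≤ (T.erase w0).card := by
          have h := Finset.pred_card_le_card_erase (s := T) (a := w0)
          omega
        obtain ⟨t1, ht1, t2, ht2, h12⟩ :=
          Finset.one_lt_card.mp (show 1 < (T.erase w0).card by omega)
        have ht1T := Finset.mem_of_mem_erase ht1
        have ht2T := Finset.mem_of_mem_erase ht2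
        have ht1w := (Finset.mem_erase.mp ht1).1
        have ht2w := (Finset.mem_erase.mp ht2).1
        by_cases hxw : x = w0
        · -- x = w0 : its in-degree is forced to be tiny
          have hdx : d x = L.card := hallB x ((hmemB x).mpr hx)
          have hsubLT : (ExNbr A x).filter (fun u => d u ≤ 1) ⊆ L \ T := by
            intro t ht
            rw [Finset.mem_filter] at ht
            have htL : t ∈ L := (hmemL t).mpr ht.2
            rw [Finset.mem_sdiff]
            refine ⟨htL, fun htT => ?_⟩
            have htw0 : t ≠ w0 := by
              intro h
              rw [h, ← hxw] at ht
              have := ht.2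
              omega
            have hft : f t = w0 := hw0 t htT htw0
            have hA1 : A (f t) t := hfA t (hTd1 t htT)
            rw [hft, ← hxw] at hA1
            exact hori x t hA1 (ExS21.mem_Nbr.mp ht.1)
          have hcle := Finset.card_le_card hsubLT
          rw [Finset.card_sdiff_of_subset hTsubL] at hcle
          have h1 := hsplit x
          have h2 := hBpart x
          omega
        · -- x ≠ w0
          have key : ∀ t, t ∈ T.erase w0 → ∀ z, A z x → z = t ∨ z = w0 := by
            intro t ht z hz
            have htT := Finset.mem_of_mem_erase ht
            have htw := (Finset.mem_erase.mp ht).1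
            refine ExS21.s1 hori hfree (hTA t htT) hxA ?_ ?_ hxw hz
            · rw [hfspec t (hTd1 t htT), hw0 t htT htw]
            · intro h
              rw [h] at hx
              have := hTd1 t htT
              omega
          have hzw : ∀ z, A z x → z = w0 := by
            intro z hz
            rcases key t1 ht1 z hz with h | h
            · rcases key t2 ht2 z hz with h' | h'
              · exact absurd (h.symm.trans h') h12
              · exact h'
            · exact h
          obtain ⟨z1, hz1, z2, hz2, hz12⟩ :=
            Finset.one_lt_card.mp (show 1 < (ExNbr A x).card from hx)
          have e1 := hzw z1 (ExS21.mem_Nbr.mp hz1)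
          have e2 := hzw z2 (ExS21.mem_Nbr.mp hz2)
          exact hz12 (e1.trans e2.symm)
      -- now every vertex of B has in-neighbourhood exactly L
      have hNL : ∀ v ∈ B, ExNbr A v = L := by
        intro v hv
        apply Finset.eq_of_subset_of_card_le
        · intro z hz
          exact (hmemL z).mpr (hnoBB v hv z (ExS21.mem_Nbr.mp hz))
        · exact le_of_eq (hallB v hv).symm
      obtain ⟨v0, hv0⟩ := Finset.card_pos.mp (show 0 < B.card by omega)
      have hLT : ∀ t ∈ L, A t v0 := fun t ht => ExS21.mem_Nbr.mp (by rw [hNL v0 hv0]; exact ht)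
      obtain ⟨w0, hw0⟩ := ExS21.claimC L f (by omega)
        (fun t1 ht1 t2 ht2 h12 => hpairgen v0 t1 (hLT t1 ht1) t2 (hLT t2 ht2)
          (hallL t1 ht1) (hallL t2 ht2) h12)
        (h2cycgen L hallL)
      by_cases hw0B : 2 ≤ d w0
      · have hw0B' : w0 ∈ B := (hmemB w0).mpr hw0B
        obtain ⟨t, ht⟩ := Finset.card_pos.mp (show 0 < L.card by omega)
        have htw0 : t ≠ w0 := by
          intro h
          rw [h] at ht
          have := hallL w0 ht
          omega
        have h1 : A w0 t := by
          have := hfA t (hallL t ht)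
          rw [hw0 t ht htw0] at this
          exact this
        have h2 : A t w0 := ExS21.mem_Nbr.mp (by rw [hNL w0 hw0B']; exact ht)
        exact hori _ _ h1 h2
      · have hw0L : w0 ∈ L := (hmemL w0).mpr (by omega)
        have hd1 : d w0 = 1 := hallL w0 hw0L
        have hA1 : A (f w0) w0 := hfA w0 hd1
        by_cases hw1 : 2 ≤ d (f w0)
        · have hw1B : f w0 ∈ B := (hmemB _).mpr hw1
          have : A w0 (f w0) := ExS21.mem_Nbr.mp (by rw [hNL _ hw1B]; exact hw0L)
          exact hori _ _ this hA1
        · have hw1L : f w0 ∈ L := (hmemL _).mpr (by omega)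
          have hne : f w0 ≠ w0 := hfne w0 hd1
          have hfw1 : f (f w0) = w0 := hw0 (f w0) hw1L hne
          have hA2 : A w0 (f w0) := by
            have := hfA (f w0) (hallL _ hw1L)
            rw [hfw1] at this
            exact this
          exact hori _ _ hA2 hA1
    -- ------------- Subcase B : there is a full vertex -------------
    · have hFne : F.Nonempty := Finset.nonempty_iff_ne_empty.mpr hF0
      obtain ⟨vs, hvsF⟩ := hFne
      have hvsd : d vs = L.card + 1 := ((hmemF vs).mp hvsF).2
      obtain ⟨hLsubvs, xs, hxsA, hxsd, hxsu⟩ := hFstruct vs hvsd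
      have hAvs : ∀ y ∈ K, A y vs := fun y hy => ExS21.mem_Nbr.mp (hLsubvs (hKsubL hy))
      -- O1 : the unique big in-neighbour of a full vertex
      have hO1 : ∀ u ∈ K, ∀ v : V, d v = L.card + 1 → ∀ x, A x v → 2 ≤ d x → x ≠ f u →
          ExNbr A x = {u, f u} := by
        intro u huK v hv x hxA hxd hxw
        have hduK := (hmemK u).mp huK
        have hLsub := (hFstruct v hv).1
        have huA : A u v := ExS21.mem_Nbr.mp (hLsub (hKsubL huK))
        have hux : u ≠ x := by
          intro h
          rw [← h] at hxd
          omega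
        have hufu : u ≠ f u := Ne.symm (hfne u hduK)
        have hsub : ExNbr A x ⊆ {u, f u} := by
          intro z hz
          rcases ExS21.keyA hori hfree huA hxA hux (hfA u hduK) (fun h => hxw h.symm)
            (ExS21.mem_Nbr.mp hz) with h | h <;> simp [h]
        apply Finset.eq_of_subset_of_card_le hsub
        calc ({u, f u} : Finset V).card ≤ 2 := (Finset.card_insert_le _ _).trans (by simp)
          _ ≤ (ExNbr A x).card := hxd
      -- B2 : no degree-one vertex has a small in-neighbour
      have hB2 : ∀ u ∈ K, d (f u) ≤ 1 → False := by
        intro u huK hwL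
        have hdu := (hmemK u).mp huK
        have hwA : A (f u) u := hfA u hdu
        have hufu : u ≠ f u := Ne.symm (hfne u hdu)
        have hxsfu : xs ≠ f u := by
          intro h
          rw [h] at hxsd
          omega
        have hNxs : ExNbr A xs = {u, f u} := hO1 u huK vs hvsd xs hxsA hxsd hxsfu
        rcases le_or_gt (K.card + 2) L.card with hk | hk
        · -- counting contradiction when K is not too large
          set D : Finset V := B.filter (fun x => ExNbr A x = {u, f u}) with hDdef
          have hDcard2 : ∀ x ∈ D, d x = 2 := by
            intro x hx
            rw [hDdef, Finset.mem_filter] at hx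
            have h1 : d x = ({u, f u} : Finset V).card := congrArg Finset.card hx.2
            rw [Finset.card_pair hufu] at h1
            exact h1
          have hxsD : xs ∈ D := by
            rw [hDdef, Finset.mem_filter]
            exact ⟨(hmemB xs).mpr hxsd, hNxs⟩
          have hDsubB : D ⊆ B := Finset.filter_subset _ _
          have hFD : Disjoint F D := by
            rw [Finset.disjoint_right]
            intro x hx hxF
            have := hDcard2 x hx
            have := ((hmemF x).mp hxF).2
            omega
          have hFDsub : F ∪ D ⊆ B := Finset.union_subset hFsubB hDsubB
          have hsum1 : ∑ v ∈ B \ (F ∪ D), d v + (∑ v ∈ F, d v + ∑ v ∈ D, d v) = ∑ v ∈ B, d v := by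
            rw [← Finset.sum_union hFD]
            exact Finset.sum_sdiff hFDsub
          have hFsum : ∑ v ∈ F, d v ≤ F.card * (L.card + 1) := by
            have := Finset.sum_le_card_nsmul F d (L.card + 1)
              (fun v hv => le_of_eq ((hmemF v).mp hv).2)
            simpa [smul_eq_mul] using this
          have hDsum : ∑ v ∈ D, d v ≤ D.card * 2 := by
            have := Finset.sum_le_card_nsmul D d 2 (fun v hv => le_of_eq (hDcard2 v hv))
            simpa [smul_eq_mul] using this
          have hRsum : ∑ v ∈ B \ (F ∪ D), d v ≤ (B \ (F ∪ D)).card * L.card := by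
            have := Finset.sum_le_card_nsmul (B \ (F ∪ D)) d L.card
              (fun v hv => by
                have hvB := (Finset.mem_sdiff.mp hv).1
                have hvn := (Finset.mem_sdiff.mp hv).2
                exact hnotF v hvB (fun hvF => hvn (Finset.mem_union_left _ hvF)))
            simpa [smul_eq_mul] using this
          have hcards : (B \ (F ∪ D)).card + F.card + D.card = B.card := by
            rw [Finset.card_sdiff_of_subset hFDsub, Finset.card_union_of_disjoint hFD]
            have := Finset.card_le_card hFDsub
            rw [Finset.card_union_of_disjoint hFD] at this
            omega
          have hD1 : 1 ≤ D.card := Finset.card_pos.mpr ⟨xs, hxsD⟩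
          have h2sum : ∑ v ∈ B, d v ≤ F.card * (L.card + 1) + D.card * 2
              + (B \ (F ∪ D)).card * L.card := by omega
          exact ExS21.count1 M B.card L.card K.card F.card D.card
            ((B \ (F ∪ D)).card) (∑ v ∈ B, d v) hMeq h2sum hcards hD1 hk hBL1
        · -- K is almost all of L : combinatorial contradiction
          have hK2 : 2 ≤ (K \ {u, f u}).card := by
            have h1 := Finset.le_card_sdiff ({u, f u} : Finset V) K
            have h2 : ({u, f u} : Finset V).card ≤ 2 :=
              (Finset.card_insert_le _ _).trans (by simp)
            omega
          obtain ⟨u1, hu1, u2, hu2, h12⟩ :=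
            Finset.one_lt_card.mp (show 1 < (K \ {u, f u}).card by omega)
          have hmemKuw : ∀ y ∈ K \ ({u, f u} : Finset V), y ∈ K ∧ y ≠ u ∧ y ≠ f u := by
            intro y hy
            rw [Finset.mem_sdiff, Finset.mem_insert, Finset.mem_singleton] at hy
            exact ⟨hy.1, fun h => hy.2 (Or.inl h), fun h => hy.2 (Or.inr h)⟩
          obtain ⟨hu1K, hu1u, hu1fu⟩ := hmemKuw u1 hu1
          obtain ⟨hu2K, hu2u, hu2fu⟩ := hmemKuw u2 hu2
          have hfval : ∀ y ∈ K \ ({u, f u} : Finset V), f y = u ∨ f y = f u := by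
            intro y hy
            obtain ⟨hyK, hyu, hyfu⟩ := hmemKuw y hy
            have hdy := (hmemK y).mp hyK
            exact ExS21.s1 hori hfree (hAvs u huK) (hAvs y hyK) (hfspec u hdu)
              hyu hyfu (hfA y hdy)
          have hsame : ∀ c : V, d c ≤ 1 → f u1 = c → f u2 = c → False := by
            intro c hc hc1 hc2
            have hdu1 := (hmemK u1).mp hu1K
            have hdu2 := (hmemK u2).mp hu2K
            have hxsc : xs ≠ c := by
              intro h
              rw [h] at hxsd
              omega
            have hxsu1 : xs ≠ u1 := by
              intro h
              rw [h] at hxsd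
              omega
            have hxsu2 : xs ≠ u2 := by
              intro h
              rw [h] at hxsd
              omega
            have key1 : ∀ z, A z xs → z = u1 ∨ z = c := fun z hz =>
              ExS21.s1 hori hfree (hAvs u1 hu1K) hxsA
                (by rw [hfspec u1 hdu1, hc1]) hxsu1 hxsc hz
            have key2 : ∀ z, A z xs → z = u2 ∨ z = c := fun z hz =>
              ExS21.s1 hori hfree (hAvs u2 hu2K) hxsA
                (by rw [hfspec u2 hdu2, hc2]) hxsu2 hxsc hz
            have hzc : ∀ z, A z xs → z = c := by
              intro z hz
              rcases key1 z hz with h | h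
              · rcases key2 z hz with h' | h'
                · exact absurd (h.symm.trans h') h12
                · exact h'
              · exact h
            obtain ⟨z1, hz1, z2, hz2, hz12⟩ :=
              Finset.one_lt_card.mp (show 1 < (ExNbr A xs).card from hxsd)
            exact hz12 ((hzc z1 (ExS21.mem_Nbr.mp hz1)).trans
              (hzc z2 (ExS21.mem_Nbr.mp hz2)).symm)
          have hmix : ∀ y1 y2 : V, y1 ∈ K \ ({u, f u} : Finset V) →
              y2 ∈ K \ ({u, f u} : Finset V) → y1 ≠ y2 → f y1 = u → f y2 = f u → False := by
            intro y1 y2 hy1 hy2 hne hfy1 hfy2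
            obtain ⟨hy1K, hy1u, hy1fu⟩ := hmemKuw y1 hy1
            obtain ⟨hy2K, hy2u, hy2fu⟩ := hmemKuw y2 hy2
            have hdy1 := (hmemK y1).mp hy1K
            have hdy2 := (hmemK y2).mp hy2K
            have hAuy1 : A u y1 := by
              have := hfA y1 hdy1
              rw [hfy1] at this
              exact this
            have := ExS21.keyA (w2 := f u) hori hfree (hAvs y1 hy1K) (hAvs y2 hy2K) hne hAuy1
              (Ne.symm hy2u) (by rw [← hfy2]; exact hfA y2 hdy2)
            rcases this with h | h
            · -- f u = y1 : then u → y1 = f u and f u → u, contradiction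
              rw [h] at hwA
              exact hori u y1 hAuy1 hwA
            · -- f u = u
              exact hfne u hdu h
          rcases hfval u1 hu1 with h1 | h1 <;> rcases hfval u2 hu2 with h2 | h2
          · exact hsame u (by omega) h1 h2
          · exact hmix u1 u2 hu1 hu2 h12 h1 h2
          · exact hmix u2 u1 hu2 hu1 (Ne.symm h12) h2 h1
          · exact hsame (f u) hwL h1 h2
      -- Now every degree-one vertex has a big in-neighbour, all equal to w := f u0
      have hAllB : ∀ u' ∈ K, 2 ≤ d (f u') := by
        intro u' hu'
        by_contra h
        exact hB2 u' hu' (by omega)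
      have hdu0 : d u0 = 1 := (hmemK u0).mp hu0K
      have hw2 : 2 ≤ d (f u0) := hAllB u0 hu0K
      have hallw : ∀ u' ∈ K, f u' = f u0 := by
        intro u' hu'
        by_cases h : u' = u0
        · rw [h]
        · have hd' := (hmemK u').mp hu'
          have hne2 : u' ≠ f u0 := by
            intro hh
            rw [hh] at hd'
            omega
          rcases ExS21.s1 hori hfree (hAvs u0 hu0K) (hAvs u' hu') (hfspec u0 hdu0)
            h hne2 (hfA u' hd') with hcase | hcase
          · exfalso
            have := hAllB u' hu'
            rw [hcase] at this
            omega
          · exact hcase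
      have hwB : f u0 ∈ B := (hmemB _).mpr hw2
      have hwnF : f u0 ∉ F := by
        intro hwF
        have hLw := (hFstruct (f u0) ((hmemF _).mp hwF).2).1
        have : A u0 (f u0) := ExS21.mem_Nbr.mp (hLw (hKsubL hu0K))
        exact hori _ _ this (hfA u0 hdu0)
      by_cases hXW : ∀ v ∈ F, ∀ x, A x v → 2 ≤ d x → x = f u0
      · -- B1-ii : w is the unique big in-neighbour of every full vertex
        have hNwL : (ExNbr A (f u0)).filter (fun t => d t ≤ 1) ⊆ L \ K := by
          intro t ht
          rw [Finset.mem_filter] at ht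
          refine Finset.mem_sdiff.mpr ⟨(hmemL t).mpr ht.2, fun htK => ?_⟩
          have hA1 : A (f u0) t := by
            have := hfA t ((hmemK t).mp htK)
            rw [hallw t htK] at this
            exact this
          exact hori _ _ hA1 (ExS21.mem_Nbr.mp ht.1)
        have hble := Finset.card_le_card hNwL
        have hcLK : (L \ K).card + K.card = L.card := by
          rw [Finset.card_sdiff_of_subset hKsubL]
          omega
        rcases Nat.eq_zero_or_pos (((ExNbr A (f u0)).filter (fun t => ¬ d t ≤ 1)).card)
          with he | he
        · -- no big in-neighbour of w : d w + |K| ≤ |L|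
          have hdw : d (f u0) + K.card ≤ L.card := by
            have := hsplit (f u0)
            omega
          have hFsub1 : F ⊆ B.erase (f u0) := by
            intro y hy
            exact Finset.mem_erase.mpr ⟨fun h => hwnF (h ▸ hy), hFsubB hy⟩
          have hFle : F.card + 1 ≤ B.card := by
            have h1 := Finset.card_le_card hFsub1
            have h2 := Finset.card_erase_of_mem hwB
            omega
          have hsub : F ∪ {f u0} ⊆ B := Finset.union_subset hFsubB (by simp [hwB])
          have hFdisj : Disjoint F ({f u0} : Finset V) := by
            rw [Finset.disjoint_singleton_right]
            exact hwnF
          have hsum1 : ∑ v ∈ B \ (F ∪ {f u0}), d v + (∑ v ∈ F, d v + d (f u0))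
              = ∑ v ∈ B, d v := by
            rw [show ∑ v ∈ F, d v + d (f u0) = ∑ v ∈ F ∪ {f u0}, d v by
              rw [Finset.sum_union hFdisj, Finset.sum_singleton]]
            exact Finset.sum_sdiff hsub
          have hFsum : ∑ v ∈ F, d v ≤ F.card * (L.card + 1) := by
            have := Finset.sum_le_card_nsmul F d (L.card + 1)
              (fun v hv => le_of_eq ((hmemF v).mp hv).2)
            simpa [smul_eq_mul] using this
          have hRsum : ∑ v ∈ B \ (F ∪ {f u0}), d v ≤ (B \ (F ∪ {f u0})).card * L.card := by
            have := Finset.sum_le_card_nsmul (B \ (F ∪ {f u0})) d L.card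
              (fun v hv => by
                have hvB := (Finset.mem_sdiff.mp hv).1
                have hvn := (Finset.mem_sdiff.mp hv).2
                exact hnotF v hvB (fun hvF => hvn (Finset.mem_union_left _ hvF)))
            simpa [smul_eq_mul] using this
          have hcards : (B \ (F ∪ {f u0})).card + F.card + 1 = B.card := by
            rw [Finset.card_sdiff_of_subset hsub, Finset.card_union_of_disjoint hFdisj,
              Finset.card_singleton]
            have := Finset.card_le_card hsub
            rw [Finset.card_union_of_disjoint hFdisj, Finset.card_singleton] at this
            omega
          have h2sum : ∑ v ∈ B, d v ≤ F.card * (L.card + 1) + d (f u0)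
              + (B \ (F ∪ {f u0})).card * L.card := by omega
          exact ExS21.count2 M B.card L.card K.card F.card (d (f u0))
            ((B \ (F ∪ {f u0})).card) (∑ v ∈ B, d v) 0 hMeq h2sum hcards (by omega)
            (by omega) hBL1
        · -- w has a big in-neighbour x_w
          obtain ⟨xw, hxwmem⟩ := Finset.card_pos.mp he
          rw [Finset.mem_filter] at hxwmem
          have hxwA : A xw (f u0) := ExS21.mem_Nbr.mp hxwmem.1
          have hxwd : 2 ≤ d xw := by have := hxwmem.2; omega
          have hxwB : xw ∈ B := (hmemB _).mpr hxwd
          have hxwnF : xw ∉ F := by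
            intro hF'
            obtain ⟨_, x', hx'A, hx'd, hx'u⟩ := hFstruct xw ((hmemF xw).mp hF').2
            have hx'w : x' = f u0 := hXW xw hF' x' hx'A hx'd
            rw [hx'w] at hx'A
            exact hori _ _ hx'A hxwA
          have hxww : xw ≠ f u0 := fun h => hirr (f u0) (h ▸ hxwA)
          have hdw : d (f u0) + K.card ≤ L.card + 1 := by
            have := hsplit (f u0)
            have := hBpart (f u0)
            omega
          have hFsub1 : F ⊆ (B.erase (f u0)).erase xw := by
            intro y hy
            refine Finset.mem_erase.mpr ⟨fun h => hxwnF (h ▸ hy), ?_⟩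
            exact Finset.mem_erase.mpr ⟨fun h => hwnF (h ▸ hy), hFsubB hy⟩
          have hFle : F.card + 2 ≤ B.card := by
            have h1 := Finset.card_le_card hFsub1
            have h2 := Finset.card_erase_of_mem hwB
            have h3 := Finset.card_erase_of_mem
              (Finset.mem_erase.mpr ⟨hxww, hxwB⟩ : xw ∈ B.erase (f u0))
            have h4 := Finset.card_le_card (Finset.erase_subset (f u0) B)
            omega
          have hsub : F ∪ {f u0} ⊆ B := Finset.union_subset hFsubB (by simp [hwB])
          have hFdisj : Disjoint F ({f u0} : Finset V) := by
            rw [Finset.disjoint_singleton_right]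
            exact hwnF
          have hsum1 : ∑ v ∈ B \ (F ∪ {f u0}), d v + (∑ v ∈ F, d v + d (f u0))
              = ∑ v ∈ B, d v := by
            rw [show ∑ v ∈ F, d v + d (f u0) = ∑ v ∈ F ∪ {f u0}, d v by
              rw [Finset.sum_union hFdisj, Finset.sum_singleton]]
            exact Finset.sum_sdiff hsub
          have hFsum : ∑ v ∈ F, d v ≤ F.card * (L.card + 1) := by
            have := Finset.sum_le_card_nsmul F d (L.card + 1)
              (fun v hv => le_of_eq ((hmemF v).mp hv).2)
            simpa [smul_eq_mul] using this
          have hRsum : ∑ v ∈ B \ (F ∪ {f u0}), d v ≤ (B \ (F ∪ {f u0})).card * L.card := by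
            have := Finset.sum_le_card_nsmul (B \ (F ∪ {f u0})) d L.card
              (fun v hv => by
                have hvB := (Finset.mem_sdiff.mp hv).1
                have hvn := (Finset.mem_sdiff.mp hv).2
                exact hnotF v hvB (fun hvF => hvn (Finset.mem_union_left _ hvF)))
            simpa [smul_eq_mul] using this
          have hcards : (B \ (F ∪ {f u0})).card + F.card + 1 = B.card := by
            rw [Finset.card_sdiff_of_subset hsub, Finset.card_union_of_disjoint hFdisj,
              Finset.card_singleton]
            have := Finset.card_le_card hsub
            rw [Finset.card_union_of_disjoint hFdisj, Finset.card_singleton] at this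
            omega
          have h2sum : ∑ v ∈ B, d v ≤ F.card * (L.card + 1) + d (f u0)
              + (B \ (F ∪ {f u0})).card * L.card := by omega
          exact ExS21.count2 M B.card L.card K.card F.card (d (f u0))
            ((B \ (F ∪ {f u0})).card) (∑ v ∈ B, d v) 1 hMeq h2sum hcards (by omega)
            (by omega) hBL1
      · -- B1-i : some full vertex has a big in-neighbour different from w
        push_neg at hXW
        obtain ⟨v1, hv1F, x1, hx1A, hx1d, hx1w⟩ := hXW
        have hv1d : d v1 = L.card + 1 := ((hmemF v1).mp hv1F).2
        have hNx1 : ExNbr A x1 = {u0, f u0} := hO1 u0 hu0K v1 hv1d x1 hx1A hx1d hx1w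
        have hK1 : K.card = 1 := by
          have hKsub : K ⊆ {u0} := by
            intro y hyK
            have hNy : ExNbr A x1 = {y, f y} :=
              hO1 y hyK v1 hv1d x1 hx1A hx1d (fun h => hx1w (h.trans (hallw y hyK)))
            have hy1 : y ∈ ExNbr A x1 := by rw [hNy]; simp
            rw [hNx1, Finset.mem_insert, Finset.mem_singleton] at hy1
            rcases hy1 with h | h
            · simp [h]
            · exfalso
              have := (hmemK y).mp hyK
              rw [h] at this
              omega
          have h1 := Finset.card_le_card hKsub
          have h2 : 0 < K.card := Finset.card_pos.mpr ⟨u0, hu0K⟩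
          simp at h1
          omega
        set D : Finset V := B.filter (fun x => ExNbr A x = {u0, f u0}) with hDdef
        have hu0fu : u0 ≠ f u0 := Ne.symm (hfne u0 hdu0)
        have hDcard2 : ∀ x ∈ D, d x = 2 := by
          intro x hx
          rw [hDdef, Finset.mem_filter] at hx
          have h1 : d x = ({u0, f u0} : Finset V).card := congrArg Finset.card hx.2
          rw [Finset.card_pair hu0fu] at h1
          exact h1
        have hx1D : x1 ∈ D := by
          rw [hDdef, Finset.mem_filter]
          exact ⟨(hmemB x1).mpr hx1d, hNx1⟩
        have hDsubB : D ⊆ B := Finset.filter_subset _ _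
        have hwD : f u0 ∉ D := by
          intro hD'
          rw [hDdef, Finset.mem_filter] at hD'
          have : f u0 ∈ ExNbr A (f u0) := by rw [hD'.2]; simp
          exact hirr (f u0) (ExS21.mem_Nbr.mp this)
        have hFD : Disjoint F D := by
          rw [Finset.disjoint_right]
          intro x hx hxF
          have := hDcard2 x hx
          have := ((hmemF x).mp hxF).2
          omega
        have hFDw : Disjoint (F ∪ D) ({f u0} : Finset V) := by
          rw [Finset.disjoint_singleton_right, Finset.mem_union]
          rintro (h | h)
          · exact hwnF h
          · exact hwD h
        have hsub : (F ∪ D) ∪ {f u0} ⊆ B :=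
          Finset.union_subset (Finset.union_subset hFsubB hDsubB) (by simp [hwB])
        have hsum1 : ∑ v ∈ B \ ((F ∪ D) ∪ {f u0}), d v
            + (∑ v ∈ F, d v + ∑ v ∈ D, d v + d (f u0)) = ∑ v ∈ B, d v := by
          rw [show ∑ v ∈ F, d v + ∑ v ∈ D, d v + d (f u0) = ∑ v ∈ (F ∪ D) ∪ {f u0}, d v by
            rw [Finset.sum_union hFDw, Finset.sum_union hFD, Finset.sum_singleton]]
          exact Finset.sum_sdiff hsub
        have hFsum : ∑ v ∈ F, d v ≤ F.card * (L.card + 1) := by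
          have := Finset.sum_le_card_nsmul F d (L.card + 1)
            (fun v hv => le_of_eq ((hmemF v).mp hv).2)
          simpa [smul_eq_mul] using this
        have hDsum : ∑ v ∈ D, d v ≤ D.card * 2 := by
          have := Finset.sum_le_card_nsmul D d 2 (fun v hv => le_of_eq (hDcard2 v hv))
          simpa [smul_eq_mul] using this
        have hdwle : d (f u0) ≤ L.card := hnotF _ hwB hwnF
        have hRsum : ∑ v ∈ B \ ((F ∪ D) ∪ {f u0}), d v
            ≤ (B \ ((F ∪ D) ∪ {f u0})).card * L.card := by
          have := Finset.sum_le_card_nsmul (B \ ((F ∪ D) ∪ {f u0})) d L.card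
            (fun v hv => by
              have hvB := (Finset.mem_sdiff.mp hv).1
              have hvn := (Finset.mem_sdiff.mp hv).2
              exact hnotF v hvB
                (fun hvF => hvn (Finset.mem_union_left _ (Finset.mem_union_left _ hvF))))
          simpa [smul_eq_mul] using this
        have hcards : (B \ ((F ∪ D) ∪ {f u0})).card + F.card + D.card + 1 = B.card := by
          rw [Finset.card_sdiff_of_subset hsub, Finset.card_union_of_disjoint hFDw,
            Finset.card_union_of_disjoint hFD, Finset.card_singleton]
          have := Finset.card_le_card hsub
          rw [Finset.card_union_of_disjoint hFDw, Finset.card_union_of_disjoint hFD,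
            Finset.card_singleton] at this
          omega
        have hD1 : 1 ≤ D.card := Finset.card_pos.mpr ⟨x1, hx1D⟩
        have h2sum : ∑ v ∈ B, d v ≤ F.card * (L.card + 1) + D.card * 2 + d (f u0)
            + (B \ ((F ∪ D) ∪ {f u0})).card * L.card := by omega
        have hMeq1 : M = ∑ v ∈ B, d v + 1 := by omega
        exact ExS21.count3 M B.card L.card F.card D.card (d (f u0))
          ((B \ ((F ∪ D) ∪ {f u0})).card) (∑ v ∈ B, d v) hMeq1 h2sum hcards hdwle hD1 hl5 hBL1
end

section
/- Let n ≥ 16 and let D be an oriented graph on n vertices whose vertex set admits a partition V(D) = X ∪ Y such that: (i) |X| ∈ {⌊(n−1)/2⌋, ⌈(n−1)/2⌉}; (ii) the arcs of D are exactly: all arcs x→y with x ∈ X and y ∈ Y, together with the arcs of an in-degree 1-regular oriented graph on Y (and no arcs inside X, no arcs from Y to X). Then D is S_{2,1}-free and has exactly ⌊(n+1)²/4⌋ arcs. -/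
lemma my_ncard_prod {α β : Type*} [Fintype α] [Fintype β] (s : Set α) (t : Set β) :
    (s ×ˢ t).ncard = s.ncard * t.ncard := by
  classical
  rw [Set.ncard_eq_toFinset_card', Set.ncard_eq_toFinset_card', Set.ncard_eq_toFinset_card',
    Set.toFinset_prod, Finset.card_product]

/-- any oriented graph on `n ≥ 16` vertices of the extremal shape
(full arc set from `X` to `Y`, an in-degree 1-regular oriented graph on `Y`,
and no other arcs, with `|X| ∈ {⌊(n-1)/2⌋, ⌈(n-1)/2⌉}`) is `S_{2,1}`-free and
has exactly `⌊(n+1)²/4⌋` arcs. -/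
theorem extremal_S21_construction {V : Type*} [Fintype V] (A : V → V → Prop)
    (n : ℕ) (hn : 16 ≤ n) (hcard : Fintype.card V = n)
    (hori : IsOriented A)
    (X Y : Set V) (hpart : X ∪ Y = Set.univ) (hdisj : Disjoint X Y)
    (hXcard : X.ncard = (n - 1) / 2 ∨ X.ncard = n / 2)
    (hXY : ∀ x ∈ X, ∀ y ∈ Y, A x y)
    (hYreg : ∀ y ∈ Y, {z : V | z ∈ Y ∧ A z y}.ncard = 1)
    (honly : ∀ u v : V, A u v → (u ∈ X ∧ v ∈ Y) ∨ (u ∈ Y ∧ v ∈ Y)) :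
    SFree A 2 ∧ arcCount A = (n + 1) ^ 2 / 4 := by
  classical
  constructor
  · rintro v ⟨u, w, hu, hw, huw, huv, hwv, hA1, hA2⟩
    have hvY : v ∈ Y := by
      rcases honly _ _ (hA2 0) with ⟨_, h⟩ | ⟨_, h⟩ <;> exact h
    have huY : ∀ i, u i ∈ Y := fun i => by
      rcases honly _ _ (hA1 i) with ⟨_, h⟩ | ⟨_, h⟩ <;> exact h
    obtain ⟨a, ha⟩ := Set.ncard_eq_one.mp (hYreg v hvY)
    have h0 : u 0 ∈ ({a} : Set V) := by rw [← ha]; exact ⟨huY 0, hA2 0⟩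
    have h1 : u 1 ∈ ({a} : Set V) := by rw [← ha]; exact ⟨huY 1, hA2 1⟩
    have : (0 : Fin 2) = 1 := hu (h0.trans h1.symm)
    simp at this
  · set T : Set (V × V) := {p | p.1 ∈ Y ∧ p.2 ∈ Y ∧ A p.1 p.2} with hT
    have hset : {p : V × V | A p.1 p.2} = (X ×ˢ Y) ∪ T := by
      ext p
      constructor
      · intro hp
        rcases honly _ _ hp with ⟨h1, h2⟩ | ⟨h1, h2⟩
        · exact Or.inl ⟨h1, h2⟩
        · exact Or.inr ⟨h1, h2, hp⟩
      · rintro (⟨h1, h2⟩ | ⟨h1, h2, h3⟩)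
        · exact hXY _ h1 _ h2
        · exact h3
    have hdisjT : Disjoint (X ×ˢ Y) T := by
      rw [Set.disjoint_left]
      rintro p ⟨h1, -⟩ ⟨h2, -⟩
      exact (Set.disjoint_left.mp hdisj h1) h2
    have hXYsum : X.ncard + Y.ncard = n := by
      rw [← Set.ncard_union_eq hdisj X.toFinite Y.toFinite, hpart, Set.ncard_univ,
        Nat.card_eq_fintype_card, hcard]
    have hTcard : T.ncard = Y.ncard := by
      have himg : Prod.snd '' T = Y := by
        ext y
        constructor
        · rintro ⟨p, ⟨-, h2, -⟩, rfl⟩; exact h2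
        · intro hy
          obtain ⟨a, ha⟩ := Set.ncard_eq_one.mp (hYreg y hy)
          have hmem : a ∈ {z : V | z ∈ Y ∧ A z y} := by rw [ha]; exact rfl
          exact ⟨(a, y), ⟨hmem.1, hy, hmem.2⟩, rfl⟩
      have hinj : Set.InjOn Prod.snd T := by
        rintro ⟨z1, y1⟩ ⟨h1, h1', h1''⟩ ⟨z2, y2⟩ ⟨h2, h2', h2''⟩ heq
        simp only at heq
        subst heq
        obtain ⟨a, ha⟩ := Set.ncard_eq_one.mp (hYreg y1 h1')
        have e1 : z1 ∈ ({a} : Set V) := by rw [← ha]; exact ⟨h1, h1''⟩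
        have e2 : z2 ∈ ({a} : Set V) := by rw [← ha]; exact ⟨h2, h2''⟩
        simp only [Set.mem_singleton_iff] at e1 e2
        simp [e1, e2]
      rw [← himg, Set.ncard_image_of_injOn hinj]
    have harc : arcCount A = X.ncard * Y.ncard + Y.ncard := by
      rw [arcCount, hset, Set.ncard_union_eq hdisjT (Set.toFinite _) (Set.toFinite _),
        my_ncard_prod, hTcard]
    rw [harc]
    obtain ⟨m, hm | hm⟩ : ∃ m, n = 2 * m + 1 ∨ n = 2 * m + 2 := ⟨(n - 1) / 2, by omega⟩
    · have hx : X.ncard = m := by omega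
      have hy : Y.ncard = m + 1 := by omega
      have h4 : (n + 1) ^ 2 = 4 * ((m + 1) * (m + 1)) := by subst hm; ring
      rw [hx, hy, h4, Nat.mul_div_cancel_left _ (by norm_num : 0 < 4)]
      ring
    · have h4 : (n + 1) ^ 2 = 4 * ((m + 1) * (m + 2)) + 1 := by subst hm; ring
      rw [h4, Nat.mul_add_div (by norm_num : 0 < 4)]
      rcases hXcard with hx | hx
      · have hx' : X.ncard = m := by omega
        have hy : Y.ncard = m + 2 := by omega
        rw [hx', hy]
        ring_nf
      · have hx' : X.ncard = m + 1 := by omega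
        have hy : Y.ncard = m + 1 := by omega
        rw [hx', hy]
        ring_nf
end

section
/- Let n ≥ 40 and let D be an oriented graph on n vertices whose vertex set admits a partition V(D) = X ∪ Y such that: (i) |X| ∈ {⌊n/2⌋ − 1, ⌈n/2⌉ − 1}; (ii) the arcs of D are exactly: all arcs x→y with x ∈ X and y ∈ Y, together with the arcs of an in-degree 2-regular oriented graph on Y (and no arcs inside X, no arcs from Y to X). Then D is S_{3,1}-free and has exactly ⌊(n+2)²/4⌋ arcs. -/
/-- any oriented graph on `n ≥ 40` vertices of the extremal shape
(full arc set from `X` to `Y`, an in-degree 2-regular oriented graph on `Y`, and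
no other arcs, with `|X| ∈ {⌊n/2⌋ - 1, ⌈n/2⌉ - 1}`) is `S_{3,1}`-free and has
exactly `⌊(n+2)²/4⌋` arcs. -/
theorem extremal_S31_construction {V : Type*} [Fintype V] (A : V → V → Prop)
    (n : ℕ) (hn : 40 ≤ n) (hcard : Fintype.card V = n)
    (hori : IsOriented A)
    (X Y : Set V) (hpart : X ∪ Y = Set.univ) (hdisj : Disjoint X Y)
    (hXcard : X.ncard = n / 2 - 1 ∨ X.ncard = (n + 1) / 2 - 1)
    (hXY : ∀ x ∈ X, ∀ y ∈ Y, A x y)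
    (hYreg : ∀ y ∈ Y, {z : V | z ∈ Y ∧ A z y}.ncard = 2)
    (honly : ∀ u v : V, A u v → (u ∈ X ∧ v ∈ Y) ∨ (u ∈ Y ∧ v ∈ Y)) :
    SFree A 3 ∧ arcCount A = (n + 2) ^ 2 / 4 := by
  classical
  constructor
  · intro v hv
    obtain ⟨u, w, hu, hw, huw, huv, hwv, hA1, hA2⟩ := hv
    have hvY : v ∈ Y := by
      rcases honly _ _ (hA2 0) with h | h
      · exact h.2
      · exact h.2
    have huY : ∀ i, u i ∈ Y := by
      intro i
      rcases honly _ _ (hA1 i) with h | h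
      · exact h.2
      · exact h.2
    have hsub : ({u 0, u 1, u 2} : Set V) ⊆ {z : V | z ∈ Y ∧ A z v} := by
      intro z hz
      rcases hz with rfl | rfl | rfl <;> exact ⟨huY _, hA2 _⟩
    have h3 : ({u 0, u 1, u 2} : Set V).ncard = 3 := by
      rw [Set.ncard_eq_three]
      exact ⟨u 0, u 1, u 2, hu.ne (by decide), hu.ne (by decide), hu.ne (by decide), rfl⟩
    have hle := Set.ncard_le_ncard hsub (Set.toFinite _)
    rw [h3, hYreg v hvY] at hle
    omega
  · -- arc count
    set S : Finset (V × V) := Finset.univ.filter (fun p => A p.1 p.2) with hS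
    have harc : arcCount A = S.card := by
      rw [arcCount, Set.ncard_eq_toFinset_card']
      congr 1
      ext p
      simp [hS]
    have hY2 : ∀ p ∈ S, p.2 ∈ Y.toFinset := by
      intro p hp
      rw [hS, Finset.mem_filter] at hp
      rcases honly _ _ hp.2 with h | h <;> simp [h.2]
    have hcardS : S.card = ∑ y ∈ Y.toFinset, (S.filter (fun p => p.2 = y)).card :=
      Finset.card_eq_sum_card_fiberwise hY2
    have hfib : ∀ y ∈ Y.toFinset, (S.filter (fun p => p.2 = y)).card = X.ncard + 2 := by
      intro y hy
      have hy' : y ∈ Y := by simpa using hy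
      have hbij : (S.filter (fun p => p.2 = y)).card
          = (Finset.univ.filter (fun u => A u y)).card := by
        refine Finset.card_bij' (fun p _ => p.1) (fun z _ => (z, y)) ?_ ?_ ?_ ?_
        · intro p hp
          simp only [hS, Finset.mem_filter, Finset.mem_univ, true_and] at hp ⊢
          obtain ⟨h1, h2⟩ := hp
          rw [← h2]; exact h1
        · intro z hz
          simp only [hS, Finset.mem_filter, Finset.mem_univ, true_and] at hz ⊢
          exact ⟨hz, trivial⟩
        · intro p hp
          simp only [hS, Finset.mem_filter, Finset.mem_univ, true_and] at hp
          exact Prod.ext_iff.mpr ⟨rfl, hp.2.symm⟩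
        · intro z hz
          rfl
      rw [hbij]
      have hsplit : (Finset.univ.filter (fun u => A u y))
          = X.toFinset ∪ Finset.univ.filter (fun z => z ∈ Y ∧ A z y) := by
        ext z
        simp only [Finset.mem_filter, Finset.mem_univ, true_and, Finset.mem_union,
          Set.mem_toFinset]
        constructor
        · intro h
          rcases honly _ _ h with h' | h'
          · exact Or.inl h'.1
          · exact Or.inr ⟨h'.1, h⟩
        · rintro (h | h)
          · exact hXY _ h _ hy'
          · exact h.2
      have hdisj2 : Disjoint X.toFinset (Finset.univ.filter (fun z => z ∈ Y ∧ A z y)) := by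
        rw [Finset.disjoint_left]
        intro z hz1 hz2
        simp only [Finset.mem_filter, Finset.mem_univ, true_and, Set.mem_toFinset] at hz1 hz2
        exact hdisj.ne_of_mem hz1 hz2.1 rfl
      rw [hsplit, Finset.card_union_of_disjoint hdisj2]
      have h2 : (Finset.univ.filter (fun z => z ∈ Y ∧ A z y)).card = 2 := by
        have := hYreg y hy'
        rw [Set.ncard_eq_toFinset_card'] at this
        rw [← this]
        congr 1
        ext z
        simp
      have hXc : X.toFinset.card = X.ncard := (Set.ncard_eq_toFinset_card' X).symm
      omega
    rw [harc, hcardS, Finset.sum_congr rfl hfib, Finset.sum_const, smul_eq_mul]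
    have hYc : Y.toFinset.card = Y.ncard := (Set.ncard_eq_toFinset_card' Y).symm
    have hsum : X.ncard + Y.ncard = n := by
      rw [← Set.ncard_union_eq hdisj (Set.toFinite _) (Set.toFinite _), hpart,
        Set.ncard_univ, Nat.card_eq_fintype_card, hcard]
    rw [hYc]
    -- arithmetic
    set a := X.ncard with ha
    have hYn : Y.ncard = n - a := by omega
    rw [hYn]
    have hq : n = 2 * (n / 2) ∨ n = 2 * (n / 2) + 1 := by omega
    set q := n / 2 with hqdef
    have hq20 : 20 ≤ q := by omega
    have haq : a = q - 1 ∨ (n = 2 * q + 1 ∧ a = q) := by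
      rcases hXcard with h | h <;> omega
    have h1 : n - a = q + 1 ∨ (n - a = q + 2 ∧ a + 2 = q + 1) ∨ (n - a = q + 1 ∧ a + 2 = q + 2) := by
      omega
    rcases hq with he | ho
    · -- n even : a = q - 1 necessarily
      have ha' : a = q - 1 := by omega
      have e1 : n - a = q + 1 := by omega
      have e2 : (n - a) * (a + 2) = (q + 1) * (q + 1) := by
        rw [e1]; congr 1; omega
      rw [e2]
      have : (n + 2) ^ 2 = ((q + 1) * (q + 1)) * 4 := by
        rw [he]; ring
      rw [this, Nat.mul_div_cancel _ (by norm_num)]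
    · -- n odd
      have e2 : (n - a) * (a + 2) = (q + 1) * (q + 2) := by
        rcases haq with h | h
        · have e1 : n - a = q + 2 := by omega
          rw [e1]
          have : a + 2 = q + 1 := by omega
          rw [this]; ring
        · have e1 : n - a = q + 1 := by omega
          rw [e1]
          have : a + 2 = q + 2 := by omega
          rw [this]
      rw [e2]
      have : (n + 2) ^ 2 = ((q + 1) * (q + 2)) * 4 + 1 := by
        rw [ho]; ring
      rw [this]
      omega
end

section
/- Let n and k be integers with k ≥ 4 and n ≥ 3k+1, and let D be an S_{k,1}-free oriented graph on n vertices. Then the number of arcs of D satisfies a(D) ≤ ⌊(n+k−1)²/4⌋ + (k−1)n. -/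
open Finset
open scoped Classical

/-- finset version of in-degree -/
noncomputable def degA {V : Type*} [Fintype V] (A : V → V → Prop) (v : V) : ℕ :=
  (univ.filter fun u => A u v).card

lemma degA_eq {V : Type*} [Fintype V] (A : V → V → Prop) (v : V) :
    inDeg A v = degA A v := by
  rw [inDeg, degA, Set.ncard_eq_toFinset_card', Set.toFinset_setOf]

lemma arcCount_eq_sum {V : Type*} [Fintype V] (A : V → V → Prop) :
    arcCount A = ∑ v : V, degA A v := by
  rw [arcCount, Set.ncard_eq_toFinset_card', Set.toFinset_setOf]
  rw [Finset.card_eq_sum_card_fiberwise (f := Prod.snd) (t := univ) (fun x _ => mem_univ _)]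
  refine Finset.sum_congr rfl fun v _ => ?_
  refine Finset.card_bij' (fun p _ => p.1) (fun u _ => (u, v)) ?_ ?_ ?_ ?_
  · intro p hp
    simp only [mem_filter, mem_univ, true_and] at hp ⊢
    rcases hp with ⟨h1, h2⟩; rw [h2] at h1; exact h1
  · intro u hu
    simp only [degA, mem_filter, mem_univ, true_and] at hu ⊢
    exact ⟨hu, trivial⟩
  · intro p hp
    simp only [mem_filter] at hp
    exact Prod.ext rfl hp.2.symm
  · intro u hu; rfl

/-- Key structural lemma: every vertex has at most `k-1` in-neighbours of
in-degree at least `2k-1`. -/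
lemma key_lemma {V : Type*} [Fintype V] (A : V → V → Prop) (k : ℕ)
    (hori : IsOriented A) (hfree : SFree A k) (v : V) :
    (univ.filter fun u => A u v ∧ 2 * k - 1 ≤ degA A u).card ≤ k - 1 := by
  by_contra hcon
  push_neg at hcon
  have hk' : k ≤ (univ.filter fun u => A u v ∧ 2 * k - 1 ≤ degA A u).card := by omega
  obtain ⟨T, hTsub, hTcard⟩ := Finset.exists_subset_card_eq hk'
  have e := T.equivFinOfCardEq hTcard
  set u : Fin k → V := fun i => ((e.symm i : T) : V) with hu
  have huinj : Function.Injective u := by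
    intro i j hij
    exact e.symm.injective (Subtype.ext hij)
  have humem : ∀ i, u i ∈ T := fun i => (e.symm i).2
  have huprop : ∀ i, A (u i) v ∧ 2 * k - 1 ≤ degA A (u i) := by
    intro i
    have := hTsub (humem i)
    simpa using this
  -- the candidate sets for the w's
  set F : Finset V := insert v T with hF
  set t : Fin k → Finset V := fun i => (univ.filter fun x => A x (u i)) \ F with ht
  have htcard : ∀ i, k ≤ (t i).card := by
    intro i
    have hNF : ((univ.filter fun x => A x (u i)) ∩ F) ⊆ T.erase (u i) := by
      intro x hx
      simp only [mem_inter, mem_filter, mem_univ, true_and, hF, mem_insert] at hx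
      rcases hx with ⟨hAx, hxF⟩
      have hxv : x ≠ v := by
        rintro rfl
        exact hori _ _ (huprop i).1 hAx
      have hxT : x ∈ T := by tauto
      have hxu : x ≠ u i := by
        rintro rfl
        exact hori _ _ hAx hAx
      exact mem_erase.mpr ⟨hxu, hxT⟩
    have h1 : (T.erase (u i)).card = k - 1 := by
      rw [card_erase_of_mem (humem i), hTcard]
    have h2 := Finset.card_le_card hNF
    have h3 := Finset.card_sdiff_add_card_inter (univ.filter fun x => A x (u i)) F
    have h4 := (huprop i).2
    rw [degA] at h4
    simp only [ht]
    omega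
  -- Hall's theorem gives the w's
  have hall : ∀ s : Finset (Fin k), s.card ≤ (s.biUnion t).card := by
    intro s
    rcases s.eq_empty_or_nonempty with rfl | ⟨i, hi⟩
    · simp
    · calc s.card ≤ Fintype.card (Fin k) := Finset.card_le_univ s
        _ = k := Fintype.card_fin k
        _ ≤ (t i).card := htcard i
        _ ≤ (s.biUnion t).card :=
            Finset.card_le_card (Finset.subset_biUnion_of_mem t hi)
  obtain ⟨w, hwinj, hwmem⟩ :=
    (Finset.all_card_le_biUnion_card_iff_existsInjective' t).mp hall
  have hwA : ∀ i, A (w i) (u i) := by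
    intro i
    have := hwmem i
    simp only [ht, mem_sdiff, mem_filter, mem_univ, true_and] at this
    exact this.1
  have hwF : ∀ i, w i ∉ F := by
    intro i
    have := hwmem i
    simp only [ht, mem_sdiff] at this
    exact this.2
  refine hfree v ⟨u, w, huinj, hwinj, ?_, ?_, ?_, hwA, fun i => (huprop i).1⟩
  · intro i j h
    exact hwF j (h ▸ mem_insert_of_mem (humem i))
  · intro i h
    have hA := (huprop i).1
    rw [h] at hA
    exact hori _ _ hA hA
  · intro i h
    exact hwF i (h ▸ mem_insert_self v T)

/-- for `k ≥ 4`, `n ≥ 3k+1`, every `S_{k,1}`-free oriented graph on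
`n` vertices has at most `⌊(n+k-1)²/4⌋ + (k-1)n` arcs. -/
theorem exOri_upper_bound {V : Type*} [Fintype V] (A : V → V → Prop)
    (n k : ℕ) (hk : 4 ≤ k) (hn : 3 * k + 1 ≤ n) (hcard : Fintype.card V = n)
    (hori : IsOriented A) (hfree : SFree A k) :
    arcCount A ≤ (n + k - 1) ^ 2 / 4 + (k - 1) * n := by
  set B : Finset V := univ.filter fun v => 2 * k - 1 ≤ degA A v with hB
  set b := B.card with hb
  set s := Bᶜ.card with hs
  have hbs : b + s = n := by
    rw [hb, hs, Finset.card_add_card_compl, hcard]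
  -- bound for vertices in B
  have hBdeg : ∀ v ∈ B, degA A v ≤ (k - 1) + s := by
    intro v _
    have hsplit := Finset.card_filter_add_card_filter_not
      (s := univ.filter fun u => A u v) (p := fun u => 2 * k - 1 ≤ degA A u)
    rw [Finset.filter_filter, Finset.filter_filter] at hsplit
    have h1 := key_lemma A k hori hfree v
    have h2 : (univ.filter fun u => A u v ∧ ¬(2 * k - 1 ≤ degA A u)).card ≤ s := by
      refine Finset.card_le_card ?_
      intro x hx
      simp only [mem_filter, mem_univ, true_and] at hx
      simp only [Finset.mem_compl, hB, mem_filter, mem_univ, true_and]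
      exact hx.2
    rw [degA]
    omega
  -- bound for vertices outside B
  have hSdeg : ∀ v ∈ Bᶜ, degA A v ≤ 2 * k - 2 := by
    intro v hv
    rw [Finset.mem_compl, hB, mem_filter] at hv
    push_neg at hv
    have := hv (mem_univ v)
    omega
  have hsum : arcCount A ≤ b * ((k - 1) + s) + s * (2 * k - 2) := by
    rw [arcCount_eq_sum]
    rw [← Finset.sum_add_sum_compl B (degA A)]
    gcongr
    · calc ∑ v ∈ B, degA A v ≤ B.card * ((k - 1) + s) :=
            Finset.sum_le_card_nsmul B _ _ hBdeg
        _ = b * ((k - 1) + s) := rfl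
    · calc ∑ v ∈ Bᶜ, degA A v ≤ Bᶜ.card * (2 * k - 2) :=
            Finset.sum_le_card_nsmul Bᶜ _ _ hSdeg
        _ = s * (2 * k - 2) := rfl
  refine hsum.trans ?_
  -- arithmetic
  have h4 : (0:ℕ) < 4 := by norm_num
  rw [show (n + k - 1) ^ 2 / 4 + (k - 1) * n = ((n + k - 1) ^ 2 + (k - 1) * n * 4) / 4 from
    (Nat.add_mul_div_right _ _ h4).symm]
  rw [Nat.le_div_iff_mul_le h4]
  have h1 : 1 ≤ k := by omega
  have h2 : 2 ≤ 2 * k := by omega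
  have h3 : 1 ≤ n + k := by omega
  zify [h1, h2, h3]
  nlinarith [sq_nonneg ((b:ℤ) + k - 1 - s), hbs, sq_nonneg ((b:ℤ) - s)]
end

section
/- Let D be an oriented graph, k ≥ 2 an integer, and v a vertex with distinct in-neighbors u₁, u₂, …, u_k such that, after a suitable reordering, for each i = 1,…,k the vertex uᵢ has at least k+1−i in-neighbors outside the set {u₁,…,u_k} (i.e., the vector of in-degrees of u₁,…,u_k counted from vertices outside {u₁,…,u_k} covers (k, k−1, …, 1), meaning its i-th largest entry is at least k+1−i for every i). Then D contains a copy of S_{k,1} centered at v. -/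
lemma exists_injective_choice {V : Type*} [DecidableEq V] :
    ∀ (n : ℕ) (T : Fin n → Finset V), (∀ i : Fin n, (i : ℕ) + 1 ≤ (T i).card) →
      ∃ g : Fin n → V, Function.Injective g ∧ ∀ i, g i ∈ T i := by
  intro n
  induction n with
  | zero => exact fun T h => ⟨fun i => i.elim0, fun i => i.elim0, fun i => i.elim0⟩
  | succ n ih =>
    intro T h
    obtain ⟨a, ha⟩ := Finset.card_pos.mp (Nat.lt_of_lt_of_le (Nat.zero_lt_one) (by simpa using h 0))
    obtain ⟨g', hg'inj, hg'⟩ := ih (fun i => (T i.succ).erase a) (fun i => by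
      have h1 := h i.succ
      have h2 : (T i.succ).card - 1 ≤ ((T i.succ).erase a).card :=
        Finset.pred_card_le_card_erase
      simp only [Fin.val_succ] at h1
      show (i:ℕ)+1 ≤ ((T i.succ).erase a).card
      omega)
    have hne : ∀ i, g' i ≠ a := fun i => (Finset.mem_erase.mp (hg' i)).1
    refine ⟨Fin.cons a g', ?_, ?_⟩
    · intro i j hij
      induction i using Fin.cases with
      | zero =>
        induction j using Fin.cases with
        | zero => rfl
        | succ j => simp [Fin.cons_zero, Fin.cons_succ] at hij; exact absurd hij.symm (hne j)
      | succ i =>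
        induction j using Fin.cases with
        | zero => simp [Fin.cons_zero, Fin.cons_succ] at hij; exact absurd hij (hne i)
        | succ j =>
          simp only [Fin.cons_succ] at hij
          exact congrArg Fin.succ (hg'inj hij)
    · intro i
      induction i using Fin.cases with
      | zero => simpa using ha
      | succ i =>
        simpa using (Finset.mem_erase.mp (hg' i)).2

/-- Lemma 2.2: if `v` has distinct in-neighbours `u 0, …, u (k-1)`
and, after a suitable reordering `σ`, the `i`-th vertex `u (σ i)` has at least
`k - i` in-neighbours outside `{u 0, …, u (k-1)}` (so the vector of outside
in-degrees covers `(k, k-1, …, 1)`), then `D` contains a copy of `S_{k,1}`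
centered at `v`. -/
theorem scopy_of_cover {V : Type*} [Fintype V] (A : V → V → Prop)
    (k : ℕ) (hk : 2 ≤ k) (hori : IsOriented A)
    (v : V) (u : Fin k → V) (hinj : Function.Injective u)
    (hu : ∀ i : Fin k, A (u i) v)
    (hcover : ∃ σ : Equiv.Perm (Fin k), ∀ i : Fin k,
      k - (i : ℕ) ≤ {w : V | A w (u (σ i)) ∧ ∀ j : Fin k, w ≠ u j}.ncard) :
    HasSCopyAt A k v := by
  classical
  obtain ⟨σ, hσ⟩ := hcover
  set S : Fin k → Set V := fun i => {w : V | A w (u (σ i)) ∧ ∀ j : Fin k, w ≠ u j} with hS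
  have hfin : ∀ i, (S i).Finite := fun i => Set.toFinite _
  let e : Fin k → Fin k := fun i => ⟨k - 1 - (i : ℕ), by omega⟩
  have heinv : ∀ i, e (e i) = i := by
    intro i
    have hi := i.isLt
    apply Fin.ext
    show k - 1 - (k - 1 - (i : ℕ)) = i
    omega
  have heinj : Function.Injective e := fun a b h => by
    rw [← heinv a, h, heinv b]
  obtain ⟨g, hginj, hg⟩ := exists_injective_choice k (fun i => (hfin (e i)).toFinset) (by
    intro i
    have h1 : k - ((e i : Fin k) : ℕ) ≤ ((hfin (e i)).toFinset).card := by
      rw [← Set.ncard_eq_toFinset_card]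
      exact hσ (e i)
    have hev : ((e i : Fin k) : ℕ) = k - 1 - (i : ℕ) := rfl
    have hi := i.isLt
    show (i : ℕ) + 1 ≤ ((hfin (e i)).toFinset).card
    omega)
  set w : Fin k → V := fun m => g (e (σ.symm m)) with hw
  have hmem : ∀ m, w m ∈ S (σ.symm m) := by
    intro m
    have := hg (e (σ.symm m))
    rw [Set.Finite.mem_toFinset, heinv] at this
    simpa [hw] using this
  have hwA : ∀ m, A (w m) (u m) := by
    intro m
    have := (hmem m).1
    rwa [Equiv.apply_symm_apply] at this
  have hwne : ∀ m j, w m ≠ u j := fun m j => (hmem m).2 j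
  refine ⟨u, w, hinj, ?_, ?_, ?_, ?_, hwA, hu⟩
  · exact hginj.comp (heinj.comp (σ.symm.injective))
  · exact fun i j => (hwne j i).symm
  · intro i h
    exact hori _ _ (hu i) (h ▸ (h ▸ hu i))
  · intro i h
    exact hori _ _ (hu i) (h ▸ hwA i)
end

section
/- Let D be an oriented graph and v a vertex of D that has three distinct in-neighbors u₁, u₂, u₃ with d⁻(u₁) ≥ 4, d⁻(u₂) ≥ 3 and d⁻(u₃) ≥ 3 (i.e., the in-degree sequence of the in-neighborhood of v covers (4,3,3)). Then D contains a copy of S_{3,1} centered at v. -/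
lemma pick_lemma {V : Type*} [Fintype V] {S : Set V} {T : Finset V} (h : T.card < S.ncard) :
    ∃ x ∈ S, x ∉ T := by
  by_contra hc
  push_neg at hc
  have hsub : S ⊆ (T : Set V) := fun x hx => hc x hx
  have hle := Set.ncard_le_ncard hsub T.finite_toSet
  rw [Set.ncard_coe_finset] at hle
  omega

lemma card_pair_le {V : Type*} [DecidableEq V] (a b : V) : ({a, b} : Finset V).card ≤ 2 :=
  (Finset.card_insert_le _ _).trans (by simp)

lemma card_triple_le {V : Type*} [DecidableEq V] (a b c : V) :
    ({a, b, c} : Finset V).card ≤ 3 :=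
  (Finset.card_insert_le _ _).trans (by have := card_pair_le b c; omega)

lemma assemble {V : Type*} (A : V → V → Prop) (v u₁ u₂ u₃ w₁ w₂ w₃ : V)
    (h12 : u₁ ≠ u₂) (h13 : u₁ ≠ u₃) (h23 : u₂ ≠ u₃)
    (g12 : w₁ ≠ w₂) (g13 : w₁ ≠ w₃) (g23 : w₂ ≠ w₃)
    (c11 : w₁ ≠ u₁) (c21 : w₁ ≠ u₂) (c31 : w₁ ≠ u₃)
    (c12 : w₂ ≠ u₁) (c22 : w₂ ≠ u₂) (c32 : w₂ ≠ u₃)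
    (c13 : w₃ ≠ u₁) (c23 : w₃ ≠ u₂) (c33 : w₃ ≠ u₃)
    (uv1 : u₁ ≠ v) (uv2 : u₂ ≠ v) (uv3 : u₃ ≠ v)
    (wv1 : w₁ ≠ v) (wv2 : w₂ ≠ v) (wv3 : w₃ ≠ v)
    (aw1 : A w₁ u₁) (aw2 : A w₂ u₂) (aw3 : A w₃ u₃)
    (au1 : A u₁ v) (au2 : A u₂ v) (au3 : A u₃ v) :
    HasSCopyAt A 3 v := by
  refine ⟨![u₁, u₂, u₃], ![w₁, w₂, w₃], ?_, ?_, ?_, ?_, ?_, ?_, ?_⟩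
  · intro i j h; fin_cases i <;> fin_cases j <;> simp_all
  · intro i j h; fin_cases i <;> fin_cases j <;> simp_all
  · intro i j; fin_cases i <;> fin_cases j <;> simp_all <;> tauto
  · intro i; fin_cases i <;> simp_all
  · intro i; fin_cases i <;> simp_all
  · intro i; fin_cases i <;> simp_all
  · intro i; fin_cases i <;> simp_all

/-- Lemma 2.3(i): if `v` has three distinct in-neighbours with
in-degrees at least `4, 3, 3`, then `D` contains a copy of `S_{3,1}` centered
at `v`. -/
theorem scopy31_of_433 {V : Type*} [Fintype V] (A : V → V → Prop)
    (hori : IsOriented A) (v u₁ u₂ u₃ : V)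
    (h12 : u₁ ≠ u₂) (h13 : u₁ ≠ u₃) (h23 : u₂ ≠ u₃)
    (ha1 : A u₁ v) (ha2 : A u₂ v) (ha3 : A u₃ v)
    (hd1 : 4 ≤ inDeg A u₁) (hd2 : 3 ≤ inDeg A u₂) (hd3 : 3 ≤ inDeg A u₃) :
    HasSCopyAt A 3 v := by
  classical
  unfold inDeg at hd1 hd2 hd3
  have irr : ∀ x, ¬ A x x := fun x hx => hori x x hx hx
  have nv1 : ¬ A v u₁ := hori u₁ v ha1
  have nv2 : ¬ A v u₂ := hori u₂ v ha2
  have nv3 : ¬ A v u₃ := hori u₃ v ha3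
  have uv1 : u₁ ≠ v := fun h => irr v (h ▸ ha1)
  have uv2 : u₂ ≠ v := fun h => irr v (h ▸ ha2)
  have uv3 : u₃ ≠ v := fun h => irr v (h ▸ ha3)
  by_cases hE1 : A u₂ u₁ ∧ A u₃ u₁
  · obtain ⟨a21, a31⟩ := hE1
    have n12 : ¬ A u₁ u₂ := hori u₂ u₁ a21
    have n13 : ¬ A u₁ u₃ := hori u₃ u₁ a31
    by_cases a32 : A u₃ u₂
    · -- III.b : pick w₂, then w₁, then w₃
      have n23 : ¬ A u₂ u₃ := hori u₃ u₂ a32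
      obtain ⟨w₂, hw₂, hw₂T⟩ := pick_lemma (S := {w | A w u₂}) (T := {u₃})
        (by simp only [Finset.card_singleton]; omega)
      obtain ⟨ne23'⟩ : w₂ ≠ u₃ ∧ True := ⟨by simpa using hw₂T, trivial⟩
      obtain ⟨w₁, hw₁, hw₁T⟩ := pick_lemma (S := {w | A w u₁}) (T := {u₂, u₃, w₂})
        (by have := card_triple_le u₂ u₃ w₂; omega)
      obtain ⟨b1, b2, b3⟩ : w₁ ≠ u₂ ∧ w₁ ≠ u₃ ∧ w₁ ≠ w₂ := by simpa using hw₁T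
      obtain ⟨w₃, hw₃, hw₃T⟩ := pick_lemma (S := {w | A w u₃}) (T := {w₁, w₂})
        (by have := card_pair_le w₁ w₂; omega)
      obtain ⟨d1, d2⟩ : w₃ ≠ w₁ ∧ w₃ ≠ w₂ := by simpa using hw₃T
      exact assemble A v u₁ u₂ u₃ w₁ w₂ w₃ h12 h13 h23
        b3 d1.symm d2.symm
        (fun h => irr u₁ (h ▸ hw₁)) b1 b2
        (fun h => n12 (h ▸ hw₂)) (fun h => irr u₂ (h ▸ hw₂)) ne23'
        (fun h => n13 (h ▸ hw₃)) (fun h => n23 (h ▸ hw₃)) (fun h => irr u₃ (h ▸ hw₃))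
        uv1 uv2 uv3
        (fun h => nv1 (h ▸ hw₁)) (fun h => nv2 (h ▸ hw₂)) (fun h => nv3 (h ▸ hw₃))
        hw₁ hw₂ hw₃ ha1 ha2 ha3
    · -- III.a : pick w₃, then w₁, then w₂
      obtain ⟨w₃, hw₃, hw₃T⟩ := pick_lemma (S := {w | A w u₃}) (T := {u₁, u₂})
        (by have := card_pair_le u₁ u₂; omega)
      obtain ⟨d1, d2⟩ : w₃ ≠ u₁ ∧ w₃ ≠ u₂ := by simpa using hw₃T
      obtain ⟨w₁, hw₁, hw₁T⟩ := pick_lemma (S := {w | A w u₁}) (T := {u₂, u₃, w₃})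
        (by have := card_triple_le u₂ u₃ w₃; omega)
      obtain ⟨b1, b2, b3⟩ : w₁ ≠ u₂ ∧ w₁ ≠ u₃ ∧ w₁ ≠ w₃ := by simpa using hw₁T
      obtain ⟨w₂, hw₂, hw₂T⟩ := pick_lemma (S := {w | A w u₂}) (T := {w₁, w₃})
        (by have := card_pair_le w₁ w₃; omega)
      obtain ⟨c1, c2⟩ : w₂ ≠ w₁ ∧ w₂ ≠ w₃ := by simpa using hw₂T
      exact assemble A v u₁ u₂ u₃ w₁ w₂ w₃ h12 h13 h23
        c1.symm b3 c2
        (fun h => irr u₁ (h ▸ hw₁)) b1 b2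
        (fun h => n12 (h ▸ hw₂)) (fun h => irr u₂ (h ▸ hw₂)) (fun h => a32 (h ▸ hw₂))
        d1 d2 (fun h => irr u₃ (h ▸ hw₃))
        uv1 uv2 uv3
        (fun h => nv1 (h ▸ hw₁)) (fun h => nv2 (h ▸ hw₂)) (fun h => nv3 (h ▸ hw₃))
        hw₁ hw₂ hw₃ ha1 ha2 ha3
  · by_cases hE2 : A u₁ u₂ ∧ A u₃ u₂
    · -- II : pick w₂, then w₃, then w₁
      obtain ⟨a12, a32⟩ := hE2
      have n21 : ¬ A u₂ u₁ := hori u₁ u₂ a12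
      have n23 : ¬ A u₂ u₃ := hori u₃ u₂ a32
      obtain ⟨w₂, hw₂, hw₂T⟩ := pick_lemma (S := {w | A w u₂}) (T := {u₁, u₃})
        (by have := card_pair_le u₁ u₃; omega)
      obtain ⟨c1, c2⟩ : w₂ ≠ u₁ ∧ w₂ ≠ u₃ := by simpa using hw₂T
      obtain ⟨w₃, hw₃, hw₃T⟩ := pick_lemma (S := {w | A w u₃}) (T := {u₁, w₂})
        (by have := card_pair_le u₁ w₂; omega)
      obtain ⟨d1, d2⟩ : w₃ ≠ u₁ ∧ w₃ ≠ w₂ := by simpa using hw₃T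
      obtain ⟨w₁, hw₁, hw₁T⟩ := pick_lemma (S := {w | A w u₁}) (T := {u₃, w₂, w₃})
        (by have := card_triple_le u₃ w₂ w₃; omega)
      obtain ⟨b1, b2, b3⟩ : w₁ ≠ u₃ ∧ w₁ ≠ w₂ ∧ w₁ ≠ w₃ := by simpa using hw₁T
      exact assemble A v u₁ u₂ u₃ w₁ w₂ w₃ h12 h13 h23
        b2 b3 d2.symm
        (fun h => irr u₁ (h ▸ hw₁)) (fun h => n21 (h ▸ hw₁)) b1
        c1 (fun h => irr u₂ (h ▸ hw₂)) c2
        d1 (fun h => n23 (h ▸ hw₃)) (fun h => irr u₃ (h ▸ hw₃))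
        uv1 uv2 uv3
        (fun h => nv1 (h ▸ hw₁)) (fun h => nv2 (h ▸ hw₂)) (fun h => nv3 (h ▸ hw₃))
        hw₁ hw₂ hw₃ ha1 ha2 ha3
    · -- I : pick w₃, then w₂, then w₁
      obtain ⟨w₃, hw₃, hw₃T⟩ := pick_lemma (S := {w | A w u₃}) (T := {u₁, u₂})
        (by have := card_pair_le u₁ u₂; omega)
      obtain ⟨d1, d2⟩ : w₃ ≠ u₁ ∧ w₃ ≠ u₂ := by simpa using hw₃T
      have hpick2 : ∃ w₂ ∈ {w | A w u₂}, w₂ ≠ u₁ ∧ w₂ ≠ u₃ ∧ w₂ ≠ w₃ := by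
        rcases not_and_or.mp hE2 with h' | h'
        · obtain ⟨w₂, hw₂, hw₂T⟩ := pick_lemma (S := {w | A w u₂}) (T := {u₃, w₃})
            (by have := card_pair_le u₃ w₃; omega)
          obtain ⟨e1, e2⟩ : w₂ ≠ u₃ ∧ w₂ ≠ w₃ := by simpa using hw₂T
          exact ⟨w₂, hw₂, fun h => h' (h ▸ hw₂), e1, e2⟩
        · obtain ⟨w₂, hw₂, hw₂T⟩ := pick_lemma (S := {w | A w u₂}) (T := {u₁, w₃})
            (by have := card_pair_le u₁ w₃; omega)
          obtain ⟨e1, e2⟩ : w₂ ≠ u₁ ∧ w₂ ≠ w₃ := by simpa using hw₂T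
          exact ⟨w₂, hw₂, e1, fun h => h' (h ▸ hw₂), e2⟩
      obtain ⟨w₂, hw₂, c1, c2, c3⟩ := hpick2
      have hpick1 : ∃ w₁ ∈ {w | A w u₁}, w₁ ≠ u₂ ∧ w₁ ≠ u₃ ∧ w₁ ≠ w₂ ∧ w₁ ≠ w₃ := by
        rcases not_and_or.mp hE1 with h' | h'
        · obtain ⟨w₁, hw₁, hw₁T⟩ := pick_lemma (S := {w | A w u₁}) (T := {u₃, w₂, w₃})
            (by have := card_triple_le u₃ w₂ w₃; omega)
          obtain ⟨e1, e2, e3⟩ : w₁ ≠ u₃ ∧ w₁ ≠ w₂ ∧ w₁ ≠ w₃ := by simpa using hw₁T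
          exact ⟨w₁, hw₁, fun h => h' (h ▸ hw₁), e1, e2, e3⟩
        · obtain ⟨w₁, hw₁, hw₁T⟩ := pick_lemma (S := {w | A w u₁}) (T := {u₂, w₂, w₃})
            (by have := card_triple_le u₂ w₂ w₃; omega)
          obtain ⟨e1, e2, e3⟩ : w₁ ≠ u₂ ∧ w₁ ≠ w₂ ∧ w₁ ≠ w₃ := by simpa using hw₁T
          exact ⟨w₁, hw₁, e1, fun h => h' (h ▸ hw₁), e2, e3⟩
      obtain ⟨w₁, hw₁, b1, b2, b3, b4⟩ := hpick1
      exact assemble A v u₁ u₂ u₃ w₁ w₂ w₃ h12 h13 h23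
        b3 b4 c3
        (fun h => irr u₁ (h ▸ hw₁)) b1 b2
        c1 (fun h => irr u₂ (h ▸ hw₂)) c2
        d1 d2 (fun h => irr u₃ (h ▸ hw₃))
        uv1 uv2 uv3
        (fun h => nv1 (h ▸ hw₁)) (fun h => nv2 (h ▸ hw₂)) (fun h => nv3 (h ▸ hw₃))
        hw₁ hw₂ hw₃ ha1 ha2 ha3
end

section
/- Let D be an S_{3,1}-free oriented graph, v a vertex of D, and S = {u₁,u₂,u₃} a set of three distinct in-neighbors of v such that each uᵢ has exactly 2 in-neighbors outside S. Then there exist two distinct vertices w₁, w₂ (both not in S ∪ {v}) such that for each i ∈ {1,2,3} the set of in-neighbors of uᵢ outside S is exactly {w₁, w₂}; in particular the subdigraph induced by {v,u₁,u₂,u₃,w₁,w₂} contains a spanning subgraph isomorphic to H₁, the digraph with arcs wⱼ→uᵢ for all i,j and uᵢ→v for all i. -/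
lemma key_mem {α : Type*} {a b c e f : α} (hab : a ≠ b) (hef : e ≠ f)
    (hno : ∀ x z, (x = a ∨ x = b) → (z = e ∨ z = f) → x ≠ c → x ≠ z → c ≠ z → False) :
    c = a ∨ c = b := by
  by_contra h
  push_neg at h
  obtain ⟨hca, hcb⟩ := h
  by_cases h1 : e = c
  · have hfc : f ≠ c := fun hf => hef (by rw [h1, hf])
    by_cases hfa : f = a
    · exact hno b f (Or.inr rfl) (Or.inr rfl) (fun h => hcb h.symm)
        (by rw [hfa]; exact hab.symm) (fun h => hfc h.symm)
    · exact hno a f (Or.inl rfl) (Or.inr rfl) (fun h => hca h.symm)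
        (fun h => hfa h.symm) (fun h => hfc h.symm)
  · by_cases hea : e = a
    · exact hno b e (Or.inr rfl) (Or.inl rfl) (fun h => hcb h.symm)
        (by rw [hea]; exact hab.symm) (fun h => h1 h.symm)
    · exact hno a e (Or.inl rfl) (Or.inl rfl) (fun h => hca h.symm)
        (fun h => hea h.symm) (fun h => h1 h.symm)

lemma pair_iff {α : Type*} {a b c d : α} (hcd : c ≠ d)
    (hc : c = a ∨ c = b) (hd : d = a ∨ d = b) :
    ∀ w : α, (w = c ∨ w = d) ↔ (w = a ∨ w = b) := by
  rcases hc with rfl | rfl <;> rcases hd with rfl | rfl <;> intro w <;> tauto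


/-- Lemma 2.4(i): in an `S_{3,1}`-free oriented graph, if
`u₁,u₂,u₃` are distinct in-neighbours of `v` each with exactly two in-neighbours
outside `S = {u₁,u₂,u₃}`, then there are two distinct vertices `w₁ ≠ w₂`, not in
`S ∪ {v}`, such that the in-neighbours of each `uᵢ` outside `S` are exactly
`{w₁, w₂}` (hence the induced subdigraph on `{v,u₁,u₂,u₃,w₁,w₂}` contains a
spanning subgraph isomorphic to `H₁`). -/
theorem structure_H1 {V : Type*} [Fintype V] (A : V → V → Prop)
    (hori : IsOriented A) (hfree : SFree A 3)
    (v u₁ u₂ u₃ : V)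
    (h12 : u₁ ≠ u₂) (h13 : u₁ ≠ u₃) (h23 : u₂ ≠ u₃)
    (ha1 : A u₁ v) (ha2 : A u₂ v) (ha3 : A u₃ v)
    (hd1 : {w : V | A w u₁ ∧ w ∉ ({u₁, u₂, u₃} : Set V)}.ncard = 2)
    (hd2 : {w : V | A w u₂ ∧ w ∉ ({u₁, u₂, u₃} : Set V)}.ncard = 2)
    (hd3 : {w : V | A w u₃ ∧ w ∉ ({u₁, u₂, u₃} : Set V)}.ncard = 2) :
    ∃ w₁ w₂ : V, w₁ ≠ w₂ ∧
      w₁ ∉ ({u₁, u₂, u₃, v} : Set V) ∧ w₂ ∉ ({u₁, u₂, u₃, v} : Set V) ∧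
      (∀ w : V, (A w u₁ ∧ w ∉ ({u₁, u₂, u₃} : Set V)) ↔ (w = w₁ ∨ w = w₂)) ∧
      (∀ w : V, (A w u₂ ∧ w ∉ ({u₁, u₂, u₃} : Set V)) ↔ (w = w₁ ∨ w = w₂)) ∧
      (∀ w : V, (A w u₃ ∧ w ∉ ({u₁, u₂, u₃} : Set V)) ↔ (w = w₁ ∨ w = w₂)) := by
  classical
  obtain ⟨a, b, hab, hN1⟩ := Set.ncard_eq_two.mp hd1
  obtain ⟨c, d, hcd, hN2⟩ := Set.ncard_eq_two.mp hd2
  obtain ⟨e, f, hef, hN3⟩ := Set.ncard_eq_two.mp hd3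
  have hu1v : u₁ ≠ v := fun h => hori v v (h ▸ ha1) (h ▸ ha1)
  have hu2v : u₂ ≠ v := fun h => hori v v (h ▸ ha2) (h ▸ ha2)
  have hu3v : u₃ ≠ v := fun h => hori v v (h ▸ ha3) (h ▸ ha3)
  -- membership characterizations
  have hm1 : ∀ w : V, (A w u₁ ∧ w ∉ ({u₁, u₂, u₃} : Set V)) ↔ (w = a ∨ w = b) := by
    intro w
    have := Set.ext_iff.mp hN1 w
    simpa using this
  have hm2 : ∀ w : V, (A w u₂ ∧ w ∉ ({u₁, u₂, u₃} : Set V)) ↔ (w = c ∨ w = d) := by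
    intro w
    have := Set.ext_iff.mp hN2 w
    simpa using this
  have hm3 : ∀ w : V, (A w u₃ ∧ w ∉ ({u₁, u₂, u₃} : Set V)) ↔ (w = e ∨ w = f) := by
    intro w
    have := Set.ext_iff.mp hN3 w
    simpa using this
  -- no system of distinct representatives
  have hno : ∀ x y z : V, (x = a ∨ x = b) → (y = c ∨ y = d) → (z = e ∨ z = f) →
      x ≠ y → x ≠ z → y ≠ z → False := by
    intro x y z hx hy hz hxy hxz hyz
    have hx' := (hm1 x).mpr hx
    have hy' := (hm2 y).mpr hy
    have hz' := (hm3 z).mpr hz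
    have hxS := hx'.2; have hyS := hy'.2; have hzS := hz'.2
    simp only [Set.mem_insert_iff, Set.mem_singleton_iff, not_or] at hxS hyS hzS
    have hxv : x ≠ v := fun h => hori u₁ v ha1 (h ▸ hx'.1)
    have hyv : y ≠ v := fun h => hori u₂ v ha2 (h ▸ hy'.1)
    have hzv : z ≠ v := fun h => hori u₃ v ha3 (h ▸ hz'.1)
    obtain ⟨hxu1, hxu2, hxu3⟩ := hxS
    obtain ⟨hyu1, hyu2, hyu3⟩ := hyS
    obtain ⟨hzu1, hzu2, hzu3⟩ := hzS
    have hax := hx'.1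
    have hay := hy'.1
    have haz := hz'.1
    clear hm1 hm2 hm3 hN1 hN2 hN3 hd1 hd2 hd3 hx' hy' hz' hx hy hz
    apply hfree v
    refine ⟨![u₁, u₂, u₃], ![x, y, z], ?_, ?_, ?_, ?_, ?_, ?_, ?_⟩
    · intro i j hij
      fin_cases i <;> fin_cases j <;> simp at hij ⊢ <;> tauto
    · intro i j hij
      fin_cases i <;> fin_cases j <;> simp at hij ⊢ <;> tauto
    · intro i j
      fin_cases i <;> fin_cases j <;> simp <;> tauto
    · intro i; fin_cases i <;> simp <;> tauto
    · intro i; fin_cases i <;> simp <;> tauto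
    · intro i; fin_cases i <;> simp <;> tauto
    · intro i; fin_cases i <;> simp <;> tauto
  -- c, d ∈ {a, b}
  have hc : c = a ∨ c = b :=
    key_mem hab hef (fun x z hx hz h1 h2 h3 =>
      hno x c z hx (Or.inl rfl) hz h1 h2 h3)
  have hd : d = a ∨ d = b :=
    key_mem hab hef (fun x z hx hz h1 h2 h3 =>
      hno x d z hx (Or.inr rfl) hz h1 h2 h3)
  -- e, f ∈ {a, b}
  have he : e = a ∨ e = b :=
    key_mem hab hcd (fun x z hx hz h1 h2 h3 =>
      hno x z e hx hz (Or.inl rfl) h2 h1 (fun h => h3 h.symm))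
  have hf : f = a ∨ f = b :=
    key_mem hab hcd (fun x z hx hz h1 h2 h3 =>
      hno x z f hx hz (Or.inr rfl) h2 h1 (fun h => h3 h.symm))
  -- hence {c,d} = {a,b} and {e,f} = {a,b} as alternatives
  have hcd' := pair_iff hcd hc hd
  have hef' := pair_iff hef he hf
  have ha' := (hm1 a).mpr (Or.inl rfl)
  have hb' := (hm1 b).mpr (Or.inr rfl)
  have hav : a ≠ v := fun h => hori u₁ v ha1 (h ▸ ha'.1)
  have hbv : b ≠ v := fun h => hori u₁ v ha1 (h ▸ hb'.1)
  refine ⟨a, b, hab, ?_, ?_, hm1, fun w => (hm2 w).trans (hcd' w),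
    fun w => (hm3 w).trans (hef' w)⟩
  · have := ha'.2
    simp only [Set.mem_insert_iff, Set.mem_singleton_iff, not_or] at this ⊢
    exact ⟨this.1, this.2.1, this.2.2, hav⟩
  · have := hb'.2
    simp only [Set.mem_insert_iff, Set.mem_singleton_iff, not_or] at this ⊢
    exact ⟨this.1, this.2.1, this.2.2, hbv⟩
end

section
/- Let D be an S_{3,1}-free oriented graph, v a vertex of D, and S = {u₁,u₂,u₃} a set of three distinct in-neighbors of v such that d⁻(u₁) = d⁻(u₂) = d⁻(u₃) = 3. Then each uᵢ has exactly one in-neighbor inside S and the arcs of D within S form a directed 3-cycle on {u₁,u₂,u₃}, and there exist two distinct vertices w₁, w₂ (not in S ∪ {v}) such that for each i the two in-neighbors of uᵢ outside S are exactly w₁ and w₂; in particular the subdigraph induced by {v,u₁,u₂,u₃,w₁,w₂} contains a spanning subgraph isomorphic to H₂, the digraph with arcs wⱼ→uᵢ for all i,j, arcs uᵢ→v for all i, and a directed triangle on u₁,u₂,u₃. -/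
-- no system of distinct representatives
lemma noSDR {V : Type*} (A : V → V → Prop) (hori : IsOriented A) (hfree : SFree A 3)
    (v x y z a b c : V)
    (hxy : x ≠ y) (hxz : x ≠ z) (hyz : y ≠ z)
    (hax : A x v) (hay : A y v) (haz : A z v)
    (ha : A a x) (hb : A b y) (hc : A c z)
    (hax' : a ≠ x) (hay' : a ≠ y) (haz' : a ≠ z)
    (hbx' : b ≠ x) (hby' : b ≠ y) (hbz' : b ≠ z)
    (hcx' : c ≠ x) (hcy' : c ≠ y) (hcz' : c ≠ z)
    (hab : a ≠ b) (hac : a ≠ c) (hbc : b ≠ c) : False := by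
  have hxv : x ≠ v := fun h => hori x v hax (h ▸ hax)
  have hyv : y ≠ v := fun h => hori y v hay (h ▸ hay)
  have hzv : z ≠ v := fun h => hori z v haz (h ▸ haz)
  have hav : a ≠ v := fun h => hori x v hax (h ▸ ha)
  have hbv : b ≠ v := fun h => hori y v hay (h ▸ hb)
  have hcv : c ≠ v := fun h => hori z v haz (h ▸ hc)
  apply hfree v
  refine ⟨![x, y, z], ![a, b, c], ?_, ?_, ?_, ?_, ?_, ?_, ?_⟩
  · intro i j h
    fin_cases i <;> fin_cases j <;> simp_all
  · intro i j h
    fin_cases i <;> fin_cases j <;> simp_all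
  · intro i j
    fin_cases i <;> fin_cases j <;>
      simp_all [Ne.symm hax', Ne.symm hbx', Ne.symm hcx', Ne.symm hay', Ne.symm hby',
        Ne.symm hcy', Ne.symm haz', Ne.symm hbz', Ne.symm hcz']
  · intro i; fin_cases i <;> simpa
  · intro i; fin_cases i <;> simpa
  · intro i; fin_cases i <;> simpa
  · intro i; fin_cases i <;> simpa

-- abstract: a nonempty set, a set of size ≥ 2, and a set of size ≥ 3 admit an SDR
lemma sdr_exists {V : Type*} [Fintype V] (N₁ N₂ N₃ : Set V)
    (h1 : N₁.Nonempty) (h2 : 2 ≤ N₂.ncard) (h3 : 3 ≤ N₃.ncard)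
    (hno : ∀ a b c, a ∈ N₁ → b ∈ N₂ → c ∈ N₃ → a ≠ b → a ≠ c → b ≠ c → False) : False := by
  obtain ⟨a, ha⟩ := h1
  obtain ⟨b, hb, hba⟩ := Set.exists_mem_notMem_of_ncard_lt_ncard
    (s := ({a} : Set V)) (by simpa using lt_of_lt_of_le (by norm_num) h2)
  obtain ⟨c, hc, hcab⟩ := Set.exists_mem_notMem_of_ncard_lt_ncard
    (s := ({a, b} : Set V))
    (lt_of_le_of_lt (Set.ncard_insert_le _ _) (by simpa using lt_of_lt_of_le (by norm_num) h3))
  simp only [Set.mem_singleton_iff, Set.mem_insert_iff, not_or] at hba hcab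
  exact hno a b c ha hb hc (fun h => hba h.symm) (fun h => hcab.1 h.symm)
    (fun h => hcab.2 h.symm)

-- abstract subset lemma
lemma sdr_subset {V : Type*} [Fintype V] (N₁ N₂ N₃ : Set V)
    (h2 : 2 ≤ N₂.ncard) (h3 : 2 ≤ N₃.ncard)
    (hno : ∀ a b c, a ∈ N₁ → b ∈ N₂ → c ∈ N₃ → a ≠ b → a ≠ c → b ≠ c → False) :
    N₁ ⊆ N₂ := by
  intro a ha
  by_contra haN2
  obtain ⟨c, hc, hca⟩ := Set.exists_mem_notMem_of_ncard_lt_ncard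
    (s := ({a} : Set V)) (t := N₃) (by simpa using lt_of_lt_of_le (by norm_num) h3)
  obtain ⟨b, hb, hbc⟩ := Set.exists_mem_notMem_of_ncard_lt_ncard
    (s := ({c} : Set V)) (t := N₂) (by simpa using lt_of_lt_of_le (by norm_num) h2)
  simp only [Set.mem_singleton_iff] at hca hbc
  exact hno a b c ha hb hc (fun h => haN2 (h ▸ hb)) (fun h => hca h.symm) hbc

lemma no_two_inS {V : Type*} [Fintype V] (A : V → V → Prop)
    (hori : IsOriented A) (hfree : SFree A 3)
    (v x y z : V)
    (hxy : x ≠ y) (hxz : x ≠ z) (hyz : y ≠ z)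
    (hax : A x v) (hay : A y v) (haz : A z v)
    (hdx : inDeg A x = 3) (hdy : inDeg A y = 3) (hdz : inDeg A z = 3) :
    ¬ (A y x ∧ A z x) := by
  rintro ⟨hyx, hzx⟩
  set S : Set V := {x, y, z} with hS
  have hirr : ∀ w : V, ¬ A w w := fun w h => hori w w h h
  have hnxy : ¬ A x y := hori y x hyx
  have hnxz : ¬ A x z := hori z x hzx
  -- counting identities
  have cx := Set.ncard_inter_add_ncard_diff_eq_ncard {w : V | A w x} S (Set.toFinite _)
  have cy := Set.ncard_inter_add_ncard_diff_eq_ncard {w : V | A w y} S (Set.toFinite _)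
  have cz := Set.ncard_inter_add_ncard_diff_eq_ncard {w : V | A w z} S (Set.toFinite _)
  rw [show ({w : V | A w x}.ncard = 3) from hdx] at cx
  rw [show ({w : V | A w y}.ncard = 3) from hdy] at cy
  rw [show ({w : V | A w z}.ncard = 3) from hdz] at cz
  -- Tx ∩ S ⊆ {y, z}
  have hsx : ({w : V | A w x} ∩ S).ncard ≤ 2 := by
    refine le_trans (Set.ncard_le_ncard ?_ (Set.toFinite _)) (le_of_eq (Set.ncard_pair hyz))
    rintro w ⟨hw, hwS⟩
    simp only [hS, Set.mem_insert_iff, Set.mem_singleton_iff] at hwS ⊢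
    rcases hwS with rfl | h
    · exact absurd hw (hirr w)
    · exact h
  have hNx : ({w : V | A w x} \ S).Nonempty := by
    rw [← Set.ncard_pos (Set.toFinite _)]
    omega
  rcases em (A z y) with hzy | hzy
  · -- then ¬ A y z, so Tz ∩ S = ∅
    have hnyz : ¬ A y z := hori z y hzy
    have hszE : ({w : V | A w z} ∩ S) = ∅ := by
      ext w
      simp only [hS, Set.mem_inter_iff, Set.mem_setOf_eq, Set.mem_insert_iff,
        Set.mem_singleton_iff, Set.mem_empty_iff_false, iff_false, not_and]
      rintro hw (rfl | rfl | rfl)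
      · exact hnxz hw
      · exact hnyz hw
      · exact hirr w hw
    rw [hszE, Set.ncard_empty, zero_add] at cz
    have hsy : ({w : V | A w y} ∩ S).ncard ≤ 1 := by
      refine le_trans (Set.ncard_le_ncard ?_ (Set.toFinite _)) (le_of_eq (Set.ncard_singleton z))
      rintro w ⟨hw, hwS⟩
      simp only [hS, Set.mem_insert_iff, Set.mem_singleton_iff] at hwS ⊢
      rcases hwS with rfl | rfl | rfl
      · exact absurd hw hnxy
      · exact absurd hw (hirr w)
      · rfl
    refine sdr_exists ({w : V | A w x} \ S) ({w : V | A w y} \ S) ({w : V | A w z} \ S)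
      hNx (by omega) (by omega) ?_
    intro a b c ha hb hc hab hac hbc
    simp only [hS, Set.mem_diff, Set.mem_setOf_eq, Set.mem_insert_iff,
      Set.mem_singleton_iff, not_or] at ha hb hc
    exact noSDR A hori hfree v x y z a b c hxy hxz hyz hax hay haz ha.1 hb.1 hc.1
      ha.2.1 ha.2.2.1 ha.2.2.2 hb.2.1 hb.2.2.1 hb.2.2.2 hc.2.1 hc.2.2.1 hc.2.2.2 hab hac hbc
  · -- ¬ A z y, so Ty ∩ S = ∅
    have hsyE : ({w : V | A w y} ∩ S) = ∅ := by
      ext w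
      simp only [hS, Set.mem_inter_iff, Set.mem_setOf_eq, Set.mem_insert_iff,
        Set.mem_singleton_iff, Set.mem_empty_iff_false, iff_false, not_and]
      rintro hw (rfl | rfl | rfl)
      · exact hnxy hw
      · exact hirr w hw
      · exact hzy hw
    rw [hsyE, Set.ncard_empty, zero_add] at cy
    have hsz : ({w : V | A w z} ∩ S).ncard ≤ 1 := by
      refine le_trans (Set.ncard_le_ncard ?_ (Set.toFinite _)) (le_of_eq (Set.ncard_singleton y))
      rintro w ⟨hw, hwS⟩
      simp only [hS, Set.mem_insert_iff, Set.mem_singleton_iff] at hwS ⊢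
      rcases hwS with rfl | rfl | rfl
      · exact absurd hw hnxz
      · rfl
      · exact absurd hw (hirr w)
    refine sdr_exists ({w : V | A w x} \ S) ({w : V | A w z} \ S) ({w : V | A w y} \ S)
      hNx (by omega) (by omega) ?_
    intro a b c ha hb hc hab hac hbc
    simp only [hS, Set.mem_diff, Set.mem_setOf_eq, Set.mem_insert_iff,
      Set.mem_singleton_iff, not_or] at ha hb hc
    exact noSDR A hori hfree v x z y a b c hxz hxy hyz.symm hax haz hay ha.1 hb.1 hc.1
      ha.2.1 ha.2.2.2 ha.2.2.1 hb.2.1 hb.2.2.2 hb.2.2.1 hc.2.1 hc.2.2.2 hc.2.2.1 hab hac hbc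

lemma card_le_one_helper {V : Type*} [Fintype V] (A : V → V → Prop)
    (hori : IsOriented A) (x y z : V) (S : Set V)
    (hSmem : ∀ w, w ∈ S ↔ (w = x ∨ w = y ∨ w = z))
    (hnd : ¬ (A y x ∧ A z x)) : ({w : V | A w x} ∩ S).ncard ≤ 1 := by
  have hirr : ∀ w : V, ¬ A w w := fun w h => hori w w h h
  rcases em (A y x) with h | h
  · have h' : ¬ A z x := fun hz => hnd ⟨h, hz⟩
    refine le_trans (Set.ncard_le_ncard ?_ (Set.toFinite _)) (le_of_eq (Set.ncard_singleton y))
    rintro w ⟨hw, hwS⟩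
    rcases (hSmem w).mp hwS with rfl | rfl | rfl
    · exact absurd hw (hirr w)
    · rfl
    · exact absurd hw h'
  · refine le_trans (Set.ncard_le_ncard ?_ (Set.toFinite _)) (le_of_eq (Set.ncard_singleton z))
    rintro w ⟨hw, hwS⟩
    rcases (hSmem w).mp hwS with rfl | rfl | rfl
    · exact absurd hw (hirr w)
    · exact absurd hw h
    · rfl


/-- Lemma 2.4(ii): in an `S_{3,1}`-free oriented graph, if
`u₁,u₂,u₃` are distinct in-neighbours of `v` with `d⁻(u₁)=d⁻(u₂)=d⁻(u₃)=3`,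
then each `uᵢ` has exactly one in-neighbour inside `S = {u₁,u₂,u₃}`, the arcs of
`D` inside `S` form a directed 3-cycle, and there are two distinct vertices
`w₁ ≠ w₂`, not in `S ∪ {v}`, such that the in-neighbours of each `uᵢ` outside
`S` are exactly `{w₁, w₂}` (hence the induced subdigraph on
`{v,u₁,u₂,u₃,w₁,w₂}` contains a spanning subgraph isomorphic to `H₂`). -/
theorem structure_H2 {V : Type*} [Fintype V] (A : V → V → Prop)
    (hori : IsOriented A) (hfree : SFree A 3)
    (v u₁ u₂ u₃ : V)
    (h12 : u₁ ≠ u₂) (h13 : u₁ ≠ u₃) (h23 : u₂ ≠ u₃)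
    (ha1 : A u₁ v) (ha2 : A u₂ v) (ha3 : A u₃ v)
    (hd1 : inDeg A u₁ = 3) (hd2 : inDeg A u₂ = 3) (hd3 : inDeg A u₃ = 3) :
    ({z : V | z ∈ ({u₁, u₂, u₃} : Set V) ∧ A z u₁}.ncard = 1 ∧
     {z : V | z ∈ ({u₁, u₂, u₃} : Set V) ∧ A z u₂}.ncard = 1 ∧
     {z : V | z ∈ ({u₁, u₂, u₃} : Set V) ∧ A z u₃}.ncard = 1) ∧
    ((A u₁ u₂ ∧ A u₂ u₃ ∧ A u₃ u₁) ∨ (A u₁ u₃ ∧ A u₃ u₂ ∧ A u₂ u₁)) ∧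
    (∃ w₁ w₂ : V, w₁ ≠ w₂ ∧
      w₁ ∉ ({u₁, u₂, u₃, v} : Set V) ∧ w₂ ∉ ({u₁, u₂, u₃, v} : Set V) ∧
      (∀ w : V, (A w u₁ ∧ w ∉ ({u₁, u₂, u₃} : Set V)) ↔ (w = w₁ ∨ w = w₂)) ∧
      (∀ w : V, (A w u₂ ∧ w ∉ ({u₁, u₂, u₃} : Set V)) ↔ (w = w₁ ∨ w = w₂)) ∧
      (∀ w : V, (A w u₃ ∧ w ∉ ({u₁, u₂, u₃} : Set V)) ↔ (w = w₁ ∨ w = w₂))) := by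
  have hirr : ∀ w : V, ¬ A w w := fun w h => hori w w h h
  set S : Set V := {u₁, u₂, u₃} with hS
  have hSmem : ∀ w : V, w ∈ S ↔ (w = u₁ ∨ w = u₂ ∨ w = u₃) := by
    intro w; simp [hS]
  -- no vertex of S has two in-neighbours in S
  have nd1 : ¬ (A u₂ u₁ ∧ A u₃ u₁) :=
    no_two_inS A hori hfree v u₁ u₂ u₃ h12 h13 h23 ha1 ha2 ha3 hd1 hd2 hd3
  have nd2 : ¬ (A u₁ u₂ ∧ A u₃ u₂) :=
    no_two_inS A hori hfree v u₂ u₁ u₃ h12.symm h23 h13 ha2 ha1 ha3 hd2 hd1 hd3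
  have nd3 : ¬ (A u₁ u₃ ∧ A u₂ u₃) :=
    no_two_inS A hori hfree v u₃ u₁ u₂ h13.symm h23.symm h12 ha3 ha1 ha2 hd3 hd1 hd2
  -- counting
  have c1 := Set.ncard_inter_add_ncard_diff_eq_ncard {w : V | A w u₁} S (Set.toFinite _)
  have c2 := Set.ncard_inter_add_ncard_diff_eq_ncard {w : V | A w u₂} S (Set.toFinite _)
  have c3 := Set.ncard_inter_add_ncard_diff_eq_ncard {w : V | A w u₃} S (Set.toFinite _)
  rw [show ({w : V | A w u₁}.ncard = 3) from hd1] at c1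
  rw [show ({w : V | A w u₂}.ncard = 3) from hd2] at c2
  rw [show ({w : V | A w u₃}.ncard = 3) from hd3] at c3
  have s1 : ({w : V | A w u₁} ∩ S).ncard ≤ 1 :=
    card_le_one_helper A hori u₁ u₂ u₃ S hSmem nd1
  have s2 : ({w : V | A w u₂} ∩ S).ncard ≤ 1 :=
    card_le_one_helper A hori u₂ u₁ u₃ S
      (fun w => by rw [hSmem w]; tauto) nd2
  have s3 : ({w : V | A w u₃} ∩ S).ncard ≤ 1 :=
    card_le_one_helper A hori u₃ u₁ u₂ S
      (fun w => by rw [hSmem w]; tauto) nd3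
  -- the base no-SDR fact
  have hno : ∀ a b c : V, a ∈ {w : V | A w u₁} \ S → b ∈ {w : V | A w u₂} \ S →
      c ∈ {w : V | A w u₃} \ S → a ≠ b → a ≠ c → b ≠ c → False := by
    intro a b c ha hb hc hab hac hbc
    simp only [hS, Set.mem_diff, Set.mem_setOf_eq, Set.mem_insert_iff,
      Set.mem_singleton_iff, not_or] at ha hb hc
    exact noSDR A hori hfree v u₁ u₂ u₃ a b c h12 h13 h23 ha1 ha2 ha3 ha.1 hb.1 hc.1
      ha.2.1 ha.2.2.1 ha.2.2.2 hb.2.1 hb.2.2.1 hb.2.2.2 hc.2.1 hc.2.2.1 hc.2.2.2 hab hac hbc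
  -- inclusions
  have e12 : {w : V | A w u₁} \ S ⊆ {w : V | A w u₂} \ S :=
    sdr_subset _ _ _ (by omega) (by omega) hno
  have e21 : {w : V | A w u₂} \ S ⊆ {w : V | A w u₁} \ S :=
    sdr_subset _ _ ({w : V | A w u₃} \ S) (by omega) (by omega)
      (fun a b c ha hb hc hab hac hbc => hno b a c hb ha hc hab.symm hbc hac)
  have e13 : {w : V | A w u₁} \ S ⊆ {w : V | A w u₃} \ S :=
    sdr_subset _ _ ({w : V | A w u₂} \ S) (by omega) (by omega)
      (fun a b c ha hb hc hab hac hbc => hno a c b ha hc hb hac hab hbc.symm)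
  have e31 : {w : V | A w u₃} \ S ⊆ {w : V | A w u₁} \ S :=
    sdr_subset _ _ ({w : V | A w u₂} \ S) (by omega) (by omega)
      (fun a b c ha hb hc hab hac hbc => hno b c a hb hc ha hbc hab.symm hac.symm)
  have eq12 : {w : V | A w u₁} \ S = {w : V | A w u₂} \ S := subset_antisymm e12 e21
  have eq13 : {w : V | A w u₁} \ S = {w : V | A w u₃} \ S := subset_antisymm e13 e31
  -- |N₁| = 2
  have hn1 : ({w : V | A w u₁} \ S).ncard = 2 := by
    by_contra hne
    have h3 : 3 ≤ ({w : V | A w u₁} \ S).ncard := by omega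
    refine sdr_exists ({w : V | A w u₁} \ S) ({w : V | A w u₁} \ S)
      ({w : V | A w u₁} \ S) ?_ (by omega) h3 ?_
    · rw [← Set.ncard_pos (Set.toFinite _)]; omega
    · intro a b c ha hb hc hab hac hbc
      exact hno a b c ha (eq12 ▸ hb) (eq13 ▸ hc) hab hac hbc
  have hn2 : ({w : V | A w u₂} \ S).ncard = 2 := by rw [← eq12]; exact hn1
  have hn3 : ({w : V | A w u₃} \ S).ncard = 2 := by rw [← eq13]; exact hn1
  have hs1 : ({w : V | A w u₁} ∩ S).ncard = 1 := by omega
  have hs2 : ({w : V | A w u₂} ∩ S).ncard = 1 := by omega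
  have hs3 : ({w : V | A w u₃} ∩ S).ncard = 1 := by omega
  -- Part 1
  have goalset : ∀ x : V, {z : V | z ∈ S ∧ A z x} = {w : V | A w x} ∩ S := by
    intro x; ext w; simp [and_comm]
  refine ⟨⟨by rw [goalset]; exact hs1, by rw [goalset]; exact hs2,
    by rw [goalset]; exact hs3⟩, ?_, ?_⟩
  -- Part 2: the 3-cycle
  · have hne1 : ({w : V | A w u₁} ∩ S).Nonempty := by
      rw [← Set.ncard_pos (Set.toFinite _)]; omega
    have hne2 : ({w : V | A w u₂} ∩ S).Nonempty := by
      rw [← Set.ncard_pos (Set.toFinite _)]; omega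
    have hne3 : ({w : V | A w u₃} ∩ S).Nonempty := by
      rw [← Set.ncard_pos (Set.toFinite _)]; omega
    obtain ⟨e₁, he₁A, he₁S⟩ := hne1
    obtain ⟨e₂, he₂A, he₂S⟩ := hne2
    obtain ⟨e₃, he₃A, he₃S⟩ := hne3
    simp only [Set.mem_setOf_eq] at he₁A he₂A he₃A
    rcases (hSmem e₁).mp he₁S with h | h | h
    · exact absurd (h ▸ he₁A) (hirr u₁)
    · -- A u₂ u₁
      have hA21 : A u₂ u₁ := h ▸ he₁A
      right
      have hA32 : A u₃ u₂ := by
        rcases (hSmem e₂).mp he₂S with h2 | h2 | h2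
        · exact absurd (h2 ▸ he₂A) (hori u₂ u₁ hA21)
        · exact absurd (h2 ▸ he₂A) (hirr u₂)
        · exact h2 ▸ he₂A
      have hA13 : A u₁ u₃ := by
        rcases (hSmem e₃).mp he₃S with h3 | h3 | h3
        · exact h3 ▸ he₃A
        · exact absurd (h3 ▸ he₃A) (hori u₃ u₂ hA32)
        · exact absurd (h3 ▸ he₃A) (hirr u₃)
      exact ⟨hA13, hA32, hA21⟩
    · -- A u₃ u₁
      have hA31 : A u₃ u₁ := h ▸ he₁A
      left
      have hA23 : A u₂ u₃ := by
        rcases (hSmem e₃).mp he₃S with h3 | h3 | h3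
        · exact absurd (h3 ▸ he₃A) (hori u₃ u₁ hA31)
        · exact h3 ▸ he₃A
        · exact absurd (h3 ▸ he₃A) (hirr u₃)
      have hA12 : A u₁ u₂ := by
        rcases (hSmem e₂).mp he₂S with h2 | h2 | h2
        · exact h2 ▸ he₂A
        · exact absurd (h2 ▸ he₂A) (hirr u₂)
        · exact absurd (h2 ▸ he₂A) (hori u₂ u₃ hA23)
      exact ⟨hA12, hA23, hA31⟩
  -- Part 3: the two outside in-neighbours
  · obtain ⟨w₁, w₂, hw12, hNeq⟩ := Set.ncard_eq_two.mp hn1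
    have hmem : ∀ w : V, w ∈ {w : V | A w u₁} \ S ↔ (w = w₁ ∨ w = w₂) := by
      intro w; rw [hNeq]; simp
    have hw1 : w₁ ∈ {w : V | A w u₁} \ S := by rw [hNeq]; simp
    have hw2 : w₂ ∈ {w : V | A w u₁} \ S := by rw [hNeq]; simp
    have hw1v : w₁ ≠ v := fun h => hori u₁ v ha1 (h ▸ hw1.1)
    have hw2v : w₂ ≠ v := fun h => hori u₁ v ha1 (h ▸ hw2.1)
    have hw1S := hw1.2
    have hw2S := hw2.2
    rw [hSmem] at hw1S hw2S
    push_neg at hw1S hw2S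
    refine ⟨w₁, w₂, hw12, ?_, ?_, ?_, ?_, ?_⟩
    · simp only [Set.mem_insert_iff, Set.mem_singleton_iff, not_or]
      exact ⟨hw1S.1, hw1S.2.1, hw1S.2.2, hw1v⟩
    · simp only [Set.mem_insert_iff, Set.mem_singleton_iff, not_or]
      exact ⟨hw2S.1, hw2S.2.1, hw2S.2.2, hw2v⟩
    · intro w
      rw [← hmem w]
      simp [Set.mem_diff]
    · intro w
      rw [← hmem w, eq12]
      simp [Set.mem_diff]
    · intro w
      rw [← hmem w, eq13]
      simp [Set.mem_diff]
end
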